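/- arXiv:1703.07320 — 5 statements merged into one kernel-verified Lean document; each statement's English description precedes it below -/
import Mathlib

section
/- Let X be a tree (a connected acyclic simple graph), let e₀ be an edge of X and let v be a vertex of X incident to at least one edge. Then there exists a unique edge e₁ incident to v whose gallery distance to e₀ is minimal among all edges incident to v, and every other edge incident to v has gallery distance to e₀ equal to d(e₀, e₁) + 1. -/
open SimpleGraph

section Aux

variable {V : Type*} {G : SimpleGraph V}

private lemma sym2_exists_rep (s : Sym2 V) : ∃ x y, s = s(x, y) := by
  induction s using Sym2.ind with
  | _ x y => exact ⟨x, y, rfl⟩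

/-- Upper bound: from a walk between endpoints, build a gallery. -/
private lemma gallery_ub {x u : V} (p : G.Walk x u) (e₀ e : G.edgeSet)
    (hx : x ∈ (e₀ : Sym2 V)) (hu : u ∈ (e : Sym2 V)) :
    ∃ w : G.lineGraph.Walk e₀ e, w.length ≤ p.length + 1 := by
  induction p generalizing e₀ with
  | nil =>
    by_cases h : e₀ = e
    · subst h; exact ⟨.nil, by simp⟩
    · exact ⟨.cons (by rw [lineGraph_adj_iff_exists]; exact ⟨h, _, hx, hu⟩) .nil, by simp⟩
  | @cons a b c h p ih =>
    set f : G.edgeSet := ⟨s(a, b), h⟩ with hf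
    have hbf : b ∈ (f : Sym2 V) := Sym2.mem_mk_right a b
    obtain ⟨w, hw⟩ := ih f hbf hu
    by_cases hef : e₀ = f
    · subst hef
      exact ⟨w, by simp only [Walk.length_cons]; omega⟩
    · have haf : a ∈ (f : Sym2 V) := Sym2.mem_mk_left a b
      refine ⟨.cons ?_ w, ?_⟩
      · rw [lineGraph_adj_iff_exists]; exact ⟨hef, a, hx, haf⟩
      · simp only [Walk.length_cons]; omega

/-- Lower bound: from a gallery, extract a walk between endpoints. -/
private lemma gallery_lb {e₀ e : G.edgeSet} (w : G.lineGraph.Walk e₀ e) (hne : e₀ ≠ e) :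
    ∃ x u, x ∈ (e₀ : Sym2 V) ∧ u ∈ (e : Sym2 V) ∧
      ∃ p : G.Walk x u, p.length + 1 ≤ w.length := by
  induction w with
  | nil => exact absurd rfl hne
  | @cons e₀ f e ha w ih =>
    rw [lineGraph_adj_iff_exists] at ha
    obtain ⟨hef, s, hs₀, hsf⟩ := ha
    by_cases hfe : f = e
    · subst hfe
      exact ⟨s, s, hs₀, hsf, .nil, by simp⟩
    · obtain ⟨x', u, hx', hu, p, hp⟩ := ih hfe
      by_cases hsx : s = x'
      · subst hsx
        exact ⟨s, u, hs₀, hu, p, by simp only [Walk.length_cons]; omega⟩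
      · have hadj : G.Adj s x' := by
          have : (f : Sym2 V) = s(s, x') := ((Sym2.mem_and_mem_iff hsx).mp ⟨hsf, hx'⟩)
          have hmem := f.property
          rw [this, mem_edgeSet] at hmem
          exact hmem
        exact ⟨s, u, hs₀, hu, .cons hadj p, by simp only [Walk.length_cons]; omega⟩

/-- In an acyclic connected graph, adjacent vertices have distinct distances
to any vertex. -/
private lemma dist_ne_of_adj (hacyc : G.IsAcyclic) (hconn : G.Connected)
    {a b c : V} (hab : G.Adj a b) : G.dist a c ≠ G.dist b c := by
  classical
  intro he
  obtain ⟨P, hP, hPl⟩ := hconn.exists_path_of_dist a c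
  have hbP : b ∉ P.support := by
    intro hb
    have h1 : 1 ≤ (P.takeUntil b hb).length := by
      rcases Nat.eq_zero_or_pos (P.takeUntil b hb).length with h0 | hpos
      · exact absurd (Walk.eq_of_length_eq_zero h0) hab.ne
      · exact hpos
    have h2 : G.dist b c ≤ (P.dropUntil b hb).length := dist_le _
    have h3 := congrArg Walk.length (P.take_spec hb)
    rw [Walk.length_append] at h3
    omega
  have hcons : (Walk.cons hab.symm P).IsPath := hP.cons hbP
  obtain ⟨Q, hQ, hQl⟩ := hconn.exists_path_of_dist b c
  have heq := hacyc.path_unique (⟨_, hcons⟩ : G.Path b c) ⟨Q, hQ⟩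
  have hlen : (Walk.cons hab.symm P).length = Q.length := by
    rw [Subtype.ext_iff] at heq
    exact congrArg Walk.length heq
  rw [Walk.length_cons, hPl, hQl] at hlen
  omega

/-- In a tree, the neighbor of `v` that is strictly closer to `z` is unique. -/
private lemma unique_down (hacyc : G.IsAcyclic) (hconn : G.Connected)
    {v z u w : V} (hvu : G.Adj v u) (hvw : G.Adj v w)
    (hzu : G.dist u z + 1 = G.dist v z) (hzw : G.dist w z + 1 = G.dist v z) : u = w := by
  classical
  obtain ⟨p, hp, hpl⟩ := hconn.exists_path_of_dist u z
  obtain ⟨q, hq, hql⟩ := hconn.exists_path_of_dist w z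
  have hvp : v ∉ p.support := by
    intro hv
    have h2 : G.dist v z ≤ (p.dropUntil v hv).length := dist_le _
    have h3 : (p.dropUntil v hv).length ≤ p.length := Walk.length_dropUntil_le p hv
    omega
  have hvq : v ∉ q.support := by
    intro hv
    have h2 : G.dist v z ≤ (q.dropUntil v hv).length := dist_le _
    have h3 : (q.dropUntil v hv).length ≤ q.length := Walk.length_dropUntil_le q hv
    omega
  have h1 : (Walk.cons hvu p).IsPath := hp.cons hvp
  have h2 : (Walk.cons hvw q).IsPath := hq.cons hvq
  have heq := hacyc.path_unique (⟨_, h1⟩ : G.Path v z) ⟨_, h2⟩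
  rw [Subtype.ext_iff] at heq
  have := congrArg (fun r : G.Walk v z => r.getVert 1) heq
  simpa [Walk.getVert_cons (n := 1) _ _ one_ne_zero] using this

end Aux

/-- The gallery distance between two edges of a graph: the distance in the line graph. -/
noncomputable def galleryDist {V : Type*} (G : SimpleGraph V) (e e' : G.edgeSet) : ℕ :=
  G.lineGraph.dist e e'

/-- Let `X` be a tree, `e₀` an edge and `v` a vertex incident to at least
one edge. Then there is a unique edge `e₁` incident to `v` whose gallery distance to `e₀`
is minimal among edges incident to `v`, and every other edge incident to `v` is at gallery
distance `d(e₀, e₁) + 1` from `e₀`. -/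
theorem existsUnique_closest_edge_at_vertex {V : Type*} (G : SimpleGraph V)
    (htree : G.IsTree) (e₀ : G.edgeSet) (v : V) (hv : ∃ e : G.edgeSet, v ∈ (e : Sym2 V)) :
    ∃! e₁ : G.edgeSet, v ∈ (e₁ : Sym2 V) ∧
      (∀ e : G.edgeSet, v ∈ (e : Sym2 V) → galleryDist G e₀ e₁ ≤ galleryDist G e₀ e) ∧
      (∀ e : G.edgeSet, v ∈ (e : Sym2 V) → e ≠ e₁ →
        galleryDist G e₀ e = galleryDist G e₀ e₁ + 1) := by
  obtain ⟨hconn, hacyc⟩ := htree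
  obtain ⟨x, y, he⟩ := sym2_exists_rep (e₀ : Sym2 V)
  have hxy : G.Adj x y := by
    have := e₀.property
    rwa [he, mem_edgeSet] at this
  set D : V → ℕ := fun u => min (G.dist x u) (G.dist y u) with hD
  -- Upper bound on gallery distance
  have hub : ∀ (e : G.edgeSet) (u : V), u ∈ (e : Sym2 V) →
      galleryDist G e₀ e ≤ D u + 1 := by
    intro e u hu
    rcases min_cases (G.dist x u) (G.dist y u) with ⟨hmin, _⟩ | ⟨hmin, _⟩
    · obtain ⟨p, hpl⟩ := hconn.exists_walk_length_eq_dist x u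
      obtain ⟨w, hw⟩ := gallery_ub p e₀ e (by rw [he]; exact Sym2.mem_mk_left x y) hu
      calc galleryDist G e₀ e ≤ w.length := dist_le w
        _ ≤ p.length + 1 := hw
        _ = D u + 1 := by simp only [hD]; omega
    · obtain ⟨p, hpl⟩ := hconn.exists_walk_length_eq_dist y u
      obtain ⟨w, hw⟩ := gallery_ub p e₀ e (by rw [he]; exact Sym2.mem_mk_right x y) hu
      calc galleryDist G e₀ e ≤ w.length := dist_le w
        _ ≤ p.length + 1 := hw
        _ = D u + 1 := by simp only [hD]; omega
  -- Reachability in the line graph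
  have hreach : ∀ e : G.edgeSet, G.lineGraph.Reachable e₀ e := by
    intro e
    obtain ⟨a, b, hab⟩ := sym2_exists_rep (e : Sym2 V)
    obtain ⟨p, _⟩ := hconn.exists_walk_length_eq_dist x a
    obtain ⟨w, _⟩ := gallery_ub p e₀ e (by rw [he]; exact Sym2.mem_mk_left x y)
      (by rw [hab]; exact Sym2.mem_mk_left a b)
    exact ⟨w⟩
  -- Lower bound on the gallery distance
  have hlb : ∀ e : G.edgeSet, e ≠ e₀ → ∃ u ∈ (e : Sym2 V),
      D u + 1 ≤ galleryDist G e₀ e := by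
    intro e hne
    obtain ⟨w, hwl⟩ := (hreach e).exists_walk_length_eq_dist
    obtain ⟨a, u, ha, hu, p, hp⟩ := gallery_lb w (Ne.symm hne)
    refine ⟨u, hu, ?_⟩
    have hDu : D u ≤ p.length := by
      rw [he] at ha
      rcases Sym2.mem_iff'.mp ha with rfl | rfl
      · exact le_trans (min_le_left _ _) (dist_le p)
      · exact le_trans (min_le_right _ _) (dist_le p)
    calc D u + 1 ≤ p.length + 1 := by omega
      _ ≤ w.length := hp
      _ = galleryDist G e₀ e := hwl
  -- The distance formula
  have hform : ∀ (e : G.edgeSet) (a b : V), e ≠ e₀ → (e : Sym2 V) = s(a, b) →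
      galleryDist G e₀ e = min (D a) (D b) + 1 := by
    intro e a b hne hab
    refine le_antisymm ?_ ?_
    · rcases min_cases (D a) (D b) with ⟨hmin, _⟩ | ⟨hmin, _⟩
      · rw [hmin]; exact hub e a (by rw [hab]; exact Sym2.mem_mk_left a b)
      · rw [hmin]; exact hub e b (by rw [hab]; exact Sym2.mem_mk_right a b)
    · obtain ⟨u, hu, hle⟩ := hlb e hne
      rw [hab] at hu
      rcases Sym2.mem_iff'.mp hu with rfl | rfl
      · calc min (D u) (D b) + 1 ≤ D u + 1 := by omega
          _ ≤ _ := hle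
      · calc min (D a) (D u) + 1 ≤ D u + 1 := by omega
          _ ≤ _ := hle
  have hself : galleryDist G e₀ e₀ = 0 := SimpleGraph.dist_self
  -- Triangle: D changes by at most one along an edge
  have htri : ∀ {a b : V}, G.Adj a b → D b ≤ D a + 1 := by
    intro a b hab
    have h1 : G.dist x b ≤ G.dist x a + 1 := by
      have := hconn.dist_triangle (u := x) (v := a) (w := b)
      rwa [dist_eq_one_iff_adj.mpr hab] at this
    have h2 : G.dist y b ≤ G.dist y a + 1 := by
      have := hconn.dist_triangle (u := y) (v := a) (w := b)
      rwa [dist_eq_one_iff_adj.mpr hab] at this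
    simp only [hD]
    omega
  by_cases hv0 : v ∈ (e₀ : Sym2 V)
  · -- Case 1 : v is an endpoint of e₀; then e₁ = e₀ works.
    have hDv : D v = 0 := by
      rw [he] at hv0
      rcases Sym2.mem_iff'.mp hv0 with rfl | rfl
      · simp [hD, SimpleGraph.dist_self]
      · simp [hD, SimpleGraph.dist_self]
    have hthird : ∀ e : G.edgeSet, v ∈ (e : Sym2 V) → e ≠ e₀ →
        galleryDist G e₀ e = galleryDist G e₀ e₀ + 1 := by
      intro e hve hne
      obtain ⟨w, hw⟩ := Sym2.mem_iff_exists.mp hve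
      rw [hform e v w hne hw, hself, hDv]
      simp
    refine ⟨e₀, ⟨hv0, ?_, hthird⟩, ?_⟩
    · intro e _; rw [hself]; omega
    · intro e' ⟨h1, _, h3⟩
      by_contra hne
      have := h3 e₀ hv0 (Ne.symm hne)
      rw [hself] at this
      omega
  · -- Case 2 : v is not an endpoint of e₀.
    have hvx : v ≠ x := fun h => hv0 (by rw [he, h]; exact Sym2.mem_mk_left x y)
    have hvy : v ≠ y := fun h => hv0 (by rw [he, h]; exact Sym2.mem_mk_right x y)
    have hDpos : 1 ≤ D v := by
      have h1 := hconn.pos_dist_of_ne (Ne.symm hvx)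
      have h2 := hconn.pos_dist_of_ne (Ne.symm hvy)
      simp only [hD]
      omega
    -- pick the closer endpoint z of e₀
    obtain ⟨z, hzxy, hz⟩ : ∃ z, (z = x ∨ z = y) ∧ G.dist z v = D v := by
      rcases min_cases (G.dist x v) (G.dist y v) with ⟨hmin, _⟩ | ⟨hmin, _⟩
      · exact ⟨x, Or.inl rfl, by simp only [hD]; omega⟩
      · exact ⟨y, Or.inr rfl, by simp only [hD]; omega⟩
    have hvz : v ≠ z := by rcases hzxy with rfl | rfl <;> assumption
    -- shortest path from v to z; its first step gives e₁
    obtain ⟨p, hpp, hpl⟩ := hconn.exists_path_of_dist v z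
    rw [SimpleGraph.dist_comm, hz] at hpl
    cases p with
    | nil => exact absurd rfl hvz
    | @cons _ u _ hadj q =>
      have hql : q.length = D v - 1 := by
        rw [Walk.length_cons] at hpl
        omega
      have hqz : G.dist u z = D v - 1 := by
        have h1 : G.dist u z ≤ D v - 1 := hql ▸ dist_le q
        have h2 := hconn.dist_triangle (u := v) (v := u) (w := z)
        rw [dist_eq_one_iff_adj.mpr hadj] at h2
        have h3 : G.dist v z = D v := by rw [SimpleGraph.dist_comm]; exact hz
        omega
      set e₁ : G.edgeSet := ⟨s(v, u), hadj⟩ with he₁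
      have hve₁ : v ∈ (e₁ : Sym2 V) := Sym2.mem_mk_left v u
      have he₁ne : e₁ ≠ e₀ := fun h => hv0 (h ▸ hve₁)
      have hDzu : ∀ c, (c = x ∨ c = y) → D v - 1 ≤ G.dist c u := by
        intro c hc
        have h1 : G.dist c v ≤ G.dist c u + 1 := by
          have := hconn.dist_triangle (u := c) (v := u) (w := v)
          rwa [SimpleGraph.dist_comm (u := u) (v := v), dist_eq_one_iff_adj.mpr hadj] at this
        have h2 : D v ≤ G.dist c v := by
          rcases hc with rfl | rfl
          · exact min_le_left _ _
          · exact min_le_right _ _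
        omega
      have hDu : D u = D v - 1 := by
        have hle : D u ≤ D v - 1 := by
          have hzu' : G.dist z u ≤ D v - 1 := by rw [SimpleGraph.dist_comm]; omega
          rcases hzxy with rfl | rfl
          · exact le_trans (min_le_left _ _) hzu'
          · exact le_trans (min_le_right _ _) hzu'
        have hge1 := hDzu x (Or.inl rfl)
        have hge2 := hDzu y (Or.inr rfl)
        simp only [hD] at hle hge1 hge2 ⊢
        omega
      have hg₁ : galleryDist G e₀ e₁ = D v := by
        rw [hform e₁ v u he₁ne rfl, hDu]
        omega
      -- key claim: any other neighbor w of v has D w ≥ D v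
      have hkey : ∀ w : V, G.Adj v w → w ≠ u → D v ≤ D w := by
        intro w hvw hwu
        by_contra hlt
        push_neg at hlt
        -- then D w = D v - 1 and some endpoint z' with dist z' w = D v - 1
        obtain ⟨z', hz'xy, hz'w⟩ : ∃ z', (z' = x ∨ z' = y) ∧ G.dist z' w = D v - 1 := by
          have h1 : G.dist x w ≤ G.dist x v + 1 := by
            have := hconn.dist_triangle (u := x) (v := v) (w := w)
            rwa [dist_eq_one_iff_adj.mpr hvw] at this
          have hxv : D v ≤ G.dist x v := min_le_left _ _
          have hyv : D v ≤ G.dist y v := min_le_right _ _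
          have hxw1 : D v - 1 ≤ G.dist x w := by
            have := hconn.dist_triangle (u := x) (v := w) (w := v)
            rw [SimpleGraph.dist_comm (u := w) (v := v), dist_eq_one_iff_adj.mpr hvw] at this
            omega
          have hyw1 : D v - 1 ≤ G.dist y w := by
            have := hconn.dist_triangle (u := y) (v := w) (w := v)
            rw [SimpleGraph.dist_comm (u := w) (v := v), dist_eq_one_iff_adj.mpr hvw] at this
            omega
          rcases min_cases (G.dist x w) (G.dist y w) with ⟨hmin, _⟩ | ⟨hmin, _⟩
          · refine ⟨x, Or.inl rfl, ?_⟩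
            simp only [hD] at hlt hxw1 hyw1 hxv hyv ⊢
            omega
          · refine ⟨y, Or.inr rfl, ?_⟩
            simp only [hD] at hlt hxw1 hyw1 hxv hyv ⊢
            omega
        have hz'v : G.dist z' v = D v := by
          have h1 : G.dist z' v ≤ G.dist z' w + 1 := by
            have := hconn.dist_triangle (u := z') (v := w) (w := v)
            rwa [SimpleGraph.dist_comm (u := w) (v := v), dist_eq_one_iff_adj.mpr hvw] at this
          have h2 : D v ≤ G.dist z' v := by
            rcases hz'xy with rfl | rfl
            · exact min_le_left _ _
            · exact min_le_right _ _
          omega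
        by_cases hzz : z' = z
        · -- both u and w descend toward z : contradiction with unique_down
          subst hzz
          refine hwu (unique_down hacyc hconn (z := z') hvw hadj ?_ ?_)
          · rw [SimpleGraph.dist_comm (u := w) (v := z'), hz'w,
              SimpleGraph.dist_comm (u := v) (v := z'), hz'v]
            omega
          · rw [hqz, SimpleGraph.dist_comm (u := v) (v := z'), hz'v]
            omega
        · -- z and z' are the two distinct endpoints of e₀, adjacent, equal dists: contra
          have hadjzz : G.Adj z z' := by
            rcases hzxy with rfl | rfl <;> rcases hz'xy with rfl | rfl
            · exact absurd rfl (Ne.symm hzz)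
            · exact hxy
            · exact hxy.symm
            · exact absurd rfl (Ne.symm hzz)
          exact dist_ne_of_adj hacyc hconn hadjzz (by rw [hz, hz'v])
      have hthird : ∀ e : G.edgeSet, v ∈ (e : Sym2 V) → e ≠ e₁ →
          galleryDist G e₀ e = galleryDist G e₀ e₁ + 1 := by
        intro e hve hne₁
        have hne : e ≠ e₀ := fun h => hv0 (h ▸ hve)
        obtain ⟨w, hw⟩ := Sym2.mem_iff_exists.mp hve
        have hadjvw : G.Adj v w := by
          have := e.property
          rwa [hw, mem_edgeSet] at this
        have hwu : w ≠ u := by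
          intro h
          subst h
          exact hne₁ (Subtype.ext (by rw [hw]))
        have hDw := hkey w hadjvw hwu
        rw [hform e v w hne hw, hg₁]
        omega
      refine ⟨e₁, ⟨hve₁, ?_, hthird⟩, ?_⟩
      · -- minimality
        intro e hve
        have hne : e ≠ e₀ := fun h => hv0 (h ▸ hve)
        obtain ⟨w, hw⟩ := Sym2.mem_iff_exists.mp hve
        rw [hform e v w hne hw, hg₁]
        have : D v - 1 ≤ D w := by
          have hadjvw : G.Adj v w := by
            have := e.property
            rwa [hw, mem_edgeSet] at this
          have := htri hadjvw.symm
          omega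
        omega
      · -- uniqueness
        intro e' ⟨h1, h2, h3⟩
        by_contra hne
        have ha : galleryDist G e₀ e₁ = galleryDist G e₀ e' + 1 :=
          h3 e₁ hve₁ (Ne.symm hne)
        have hc : galleryDist G e₀ e' = galleryDist G e₀ e₁ + 1 := hthird e' h1 hne
        omega
end

section
/- Let q ≥ 1 be an integer, let X be a (q+1)-regular tree and let e₀ be an edge of X. Define f on the edge set of X by f(e) = (−1/q)^{d(e₀,e)}, where d is the gallery distance. Then f is harmonic, i.e. for every vertex v of X the sum of f over the q+1 edges incident to v equals 0. Moreover f is the unique function on the edges of X that is harmonic, radial (its value at an edge e depends only on d(e₀,e)), and takes the value 1 at e₀. -/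
open SimpleGraph

/-- A function on the edges of a graph is harmonic if, for every vertex `v`, the sum of its
values over the edges incident to `v` is zero. -/
def IsHarmonicEdgeFun {V : Type*} (G : SimpleGraph V) (f : G.edgeSet → ℝ) : Prop :=
  ∀ v : V, ∑ᶠ (e : G.edgeSet) (_ : v ∈ (e : Sym2 V)), f e = 0


namespace TreeHarmonicAux

variable {V : Type*} {G : SimpleGraph V}

lemma reach_dist_triangle {u v w : V} (h1 : G.Reachable u v) (h2 : G.Reachable v w) :
    G.dist u w ≤ G.dist u v + G.dist v w := by
  obtain ⟨p, hp⟩ := h1.exists_walk_length_eq_dist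
  obtain ⟨q, hq⟩ := h2.exists_walk_length_eq_dist
  calc G.dist u w ≤ (p.append q).length := SimpleGraph.dist_le _
    _ = _ := by rw [Walk.length_append, hp, hq]

lemma lg_adj_of_shared {e f : G.edgeSet} (hne : e ≠ f) {u : V} (hu : u ∈ (e : Sym2 V))
    (hf : u ∈ (f : Sym2 V)) : G.lineGraph.Adj e f :=
  lineGraph_adj_iff_exists.mpr ⟨hne, u, hu, hf⟩

lemma lg_dist_le_one_of_shared {e f : G.edgeSet} {u : V} (hu : u ∈ (e : Sym2 V))
    (hf : u ∈ (f : Sym2 V)) : G.lineGraph.dist e f ≤ 1 := by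
  rcases eq_or_ne e f with rfl | hne
  · simp [SimpleGraph.dist_self]
  · exact le_of_eq (SimpleGraph.dist_eq_one_iff_adj.mpr (lg_adj_of_shared hne hu hf))

lemma lg_reachable_aux {u v : V} (p : G.Walk u v) (e f : G.edgeSet)
    (hu : u ∈ (e : Sym2 V)) (hv : v ∈ (f : Sym2 V)) : G.lineGraph.Reachable e f := by
  induction p generalizing e with
  | nil =>
    rcases eq_or_ne e f with rfl | hne
    · exact Reachable.refl e
    · exact (lg_adj_of_shared hne hu hv).reachable
  | @cons x y z h q ih =>
    have hg : s(x, y) ∈ G.edgeSet := h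
    have r1 : G.lineGraph.Reachable e ⟨s(x, y), hg⟩ := by
      rcases eq_or_ne e ⟨s(x, y), hg⟩ with heq | hne
      · rw [heq]
      · exact (lg_adj_of_shared hne hu (by simp)).reachable
    exact r1.trans (ih _ (by simp) hv)

lemma lg_reachable (hconn : G.Connected) (e f : G.edgeSet) : G.lineGraph.Reachable e f := by
  obtain ⟨⟨x, y⟩, hxy⟩ := (e : Sym2 V).exists_rep
  obtain ⟨⟨x', y'⟩, hxy'⟩ := (f : Sym2 V).exists_rep
  have hx : x ∈ (e : Sym2 V) := by rw [← hxy]; exact Sym2.mem_mk_left x y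
  have hx' : x' ∈ (f : Sym2 V) := by rw [← hxy']; exact Sym2.mem_mk_left x' y'
  obtain ⟨p⟩ := hconn x x'
  exact lg_reachable_aux p e f hx hx'

lemma lg_dist_le {u v : V} (p : G.Walk u v) (e f : G.edgeSet)
    (hu : u ∈ (e : Sym2 V)) (hv : v ∈ (f : Sym2 V)) :
    G.lineGraph.dist e f ≤ p.length + 1 := by
  induction p generalizing e with
  | nil => simpa using lg_dist_le_one_of_shared hu hv
  | @cons x y z h q ih =>
    have hg : s(x, y) ∈ G.edgeSet := h
    have tri := reach_dist_triangle (lg_reachable_aux Walk.nil e ⟨s(x, y), hg⟩ hu (by simp))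
      (lg_reachable_aux q ⟨s(x, y), hg⟩ f (by simp) hv)
    have h1 : G.lineGraph.dist e ⟨s(x, y), hg⟩ ≤ 1 := lg_dist_le_one_of_shared hu (by simp)
    have h2 := ih ⟨s(x, y), hg⟩ (by simp) hv
    simp only [Walk.length_cons]
    omega

end TreeHarmonicAux

namespace TreeHarmonicAux

variable {V : Type*} {G : SimpleGraph V}

/-- min distance of `v` to the two endpoints `a`, `b`. -/
noncomputable def mfun (G : SimpleGraph V) (a b v : V) : ℕ :=
  min (G.dist v a) (G.dist v b)

lemma mfun_comm (G : SimpleGraph V) (a b v : V) : mfun G a b v = mfun G b a v :=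
  min_comm _ _

lemma dist_le_adj (hconn : G.Connected) {v w : V} (h : G.Adj v w) (c : V) :
    G.dist v c ≤ G.dist w c + 1 := by
  obtain ⟨p, hp⟩ := (hconn w c).exists_walk_length_eq_dist
  calc G.dist v c ≤ (Walk.cons h p).length := SimpleGraph.dist_le _
    _ = G.dist w c + 1 := by rw [Walk.length_cons, hp]

lemma mfun_adj (hconn : G.Connected) {a b v w : V} (h : G.Adj v w) :
    mfun G a b v ≤ mfun G a b w + 1 := by
  have h1 := dist_le_adj hconn h a
  have h2 := dist_le_adj hconn h b
  unfold mfun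
  omega

/-- min of `mfun` over the endpoints of an edge. -/
noncomputable def mu (G : SimpleGraph V) (a b : V) (e : G.edgeSet) : ℕ :=
  Sym2.lift ⟨fun x y => min (mfun G a b x) (mfun G a b y), fun x y => min_comm _ _⟩
    (e : Sym2 V)

lemma exists_rep_edge (e : G.edgeSet) : ∃ x y : V, (e : Sym2 V) = s(x, y) ∧ G.Adj x y := by
  obtain ⟨⟨x, y⟩, hxy⟩ := (e : Sym2 V).exists_rep
  exact ⟨x, y, hxy.symm, by have := e.2; rwa [← hxy, SimpleGraph.mem_edgeSet] at this⟩

lemma mu_eq {a b : V} {e : G.edgeSet} {x y : V} (hxy : (e : Sym2 V) = s(x, y)) :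
    mu G a b e = min (mfun G a b x) (mfun G a b y) := by
  rw [mu, hxy, Sym2.lift_mk]

lemma mu_le {a b : V} {e : G.edgeSet} {x : V} (hx : x ∈ (e : Sym2 V)) :
    mu G a b e ≤ mfun G a b x := by
  obtain ⟨y, hy⟩ := Sym2.mem_iff_exists.mp hx
  rw [mu_eq hy]
  exact min_le_left _ _

lemma mu_attained {a b : V} (e : G.edgeSet) :
    ∃ x, x ∈ (e : Sym2 V) ∧ mfun G a b x = mu G a b e := by
  obtain ⟨x, y, hxy, _⟩ := exists_rep_edge e
  rcases min_cases (mfun G a b x) (mfun G a b y) with ⟨h, _⟩ | ⟨h, _⟩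
  · exact ⟨x, by rw [hxy]; exact Sym2.mem_mk_left x y, by rw [mu_eq hxy, h]⟩
  · exact ⟨y, by rw [hxy]; exact Sym2.mem_mk_right x y, by rw [mu_eq hxy, h]⟩

lemma mfun_le_mu_add_one (hconn : G.Connected) {a b : V} {e : G.edgeSet} {x : V}
    (hx : x ∈ (e : Sym2 V)) : mfun G a b x ≤ mu G a b e + 1 := by
  obtain ⟨y, hy⟩ := Sym2.mem_iff_exists.mp hx
  have hadj : G.Adj x y := by have := e.2; rwa [hy, SimpleGraph.mem_edgeSet] at this
  have := mfun_adj hconn (a := a) (b := b) hadj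
  rw [mu_eq hy]
  omega

lemma mu_lg_adj (hconn : G.Connected) {a b : V} {e f : G.edgeSet}
    (h : G.lineGraph.Adj e f) : mu G a b f ≤ mu G a b e + 1 := by
  obtain ⟨-, u, hue, huf⟩ := lineGraph_adj_iff_exists.mp h
  exact (mu_le huf).trans (mfun_le_mu_add_one hconn hue)

lemma mu_lg_walk (hconn : G.Connected) {a b : V} {e f : G.edgeSet}
    (w : G.lineGraph.Walk e f) : mu G a b f ≤ mu G a b e + w.length := by
  induction w with
  | nil => simp
  | cons h q ih =>
    have := mu_lg_adj hconn (a := a) (b := b) h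
    rw [Walk.length_cons]
    omega

lemma mfun_a (a b : V) : mfun G a b a = 0 := by
  simp [mfun, SimpleGraph.dist_self]

lemma mfun_b (a b : V) : mfun G a b b = 0 := by
  simp [mfun, SimpleGraph.dist_self]

lemma mu_zero_of_shares (a b : V) {f : G.edgeSet} {u : V} (hu : u ∈ (f : Sym2 V))
    (h : u = a ∨ u = b) : mu G a b f = 0 := by
  have := mu_le (a := a) (b := b) hu
  rcases h with rfl | rfl
  · rw [mfun_a] at this; omega
  · rw [mfun_b] at this; omega

/-- the key distance formula: gallery distance of `e ≠ e₀` equals `mu e + 1`. -/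
lemma gal_eq (hconn : G.Connected) {a b : V} (hab : G.Adj a b) {e₀ : G.edgeSet}
    (he₀ : (e₀ : Sym2 V) = s(a, b)) {e : G.edgeSet} (hne : e ≠ e₀) :
    G.lineGraph.dist e₀ e = mu G a b e + 1 := by
  apply le_antisymm
  · -- upper bound
    obtain ⟨x, hx, hxm⟩ := mu_attained (a := a) (b := b) e
    rcases min_cases (G.dist x a) (G.dist x b) with ⟨h, _⟩ | ⟨h, _⟩
    · obtain ⟨p, hp⟩ := (hconn a x).exists_walk_length_eq_dist
      have := lg_dist_le p e₀ e (by rw [he₀]; exact Sym2.mem_mk_left a b) hx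
      rw [hp, SimpleGraph.dist_comm (G := G)] at this
      rw [← hxm, mfun, h]
      exact this
    · obtain ⟨p, hp⟩ := (hconn b x).exists_walk_length_eq_dist
      have := lg_dist_le p e₀ e (by rw [he₀]; exact Sym2.mem_mk_right a b) hx
      rw [hp, SimpleGraph.dist_comm (G := G)] at this
      rw [← hxm, mfun, h]
      exact this
  · -- lower bound
    obtain ⟨w, hw⟩ := (lg_reachable hconn e₀ e).exists_walk_length_eq_dist
    cases w with
    | nil => exact absurd rfl (Ne.symm hne)
    | @cons _ f _ h q =>
      have hf0 : mu G a b f = 0 := by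
        obtain ⟨-, u, hue, huf⟩ := lineGraph_adj_iff_exists.mp h
        rw [he₀] at hue
        exact mu_zero_of_shares a b huf (by rwa [Sym2.mem_iff] at hue)
      have := mu_lg_walk hconn (a := a) (b := b) q
      rw [Walk.length_cons] at hw
      omega

lemma gal_self (e₀ : G.edgeSet) : G.lineGraph.dist e₀ e₀ = 0 := SimpleGraph.dist_self

lemma gal_eq_zero_iff (hconn : G.Connected) {e₀ e : G.edgeSet} :
    G.lineGraph.dist e₀ e = 0 ↔ e = e₀ := by
  rw [(lg_reachable hconn e₀ e).dist_eq_zero_iff]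
  exact eq_comm

end TreeHarmonicAux

namespace TreeHarmonicAux

variable {V : Type*} {G : SimpleGraph V} [DecidableEq V]

lemma dist_support_le {x c u : V} (p : G.Walk x c) (hu : u ∈ p.support) :
    G.dist u c ≤ p.length :=
  (SimpleGraph.dist_le (p.dropUntil u hu)).trans (Walk.length_dropUntil_le p hu)

lemma S1' (hconn : G.Connected) (hac : G.IsAcyclic) {a b : V} (hab : G.Adj a b)
    {e₀ : G.edgeSet} (he₀ : (e₀ : Sym2 V) = s(a, b)) (v : V) (k : ℕ)
    (hk : G.dist v a = k + 1) (hle : G.dist v a ≤ G.dist v b) :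
    ∃ eh : G.edgeSet, v ∈ (eh : Sym2 V) ∧ G.lineGraph.dist e₀ eh = k + 1 ∧
      ∀ e : G.edgeSet, v ∈ (e : Sym2 V) → e ≠ eh → G.lineGraph.dist e₀ e = k + 2 := by
  have hmv : mfun G a b v = k + 1 := by rw [mfun, min_eq_left hle, hk]
  have hva : v ≠ a := by
    intro h; rw [h, SimpleGraph.dist_self] at hk; omega
  have hvb : v ≠ b := by
    intro h; subst h; rw [SimpleGraph.dist_self] at hle; omega
  obtain ⟨p, hp_path, hp_len⟩ := (hconn v a).exists_path_of_dist
  obtain ⟨w₀, hvw₀, q, rfl⟩ := Walk.exists_eq_cons_of_ne hva p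
  rw [hk, Walk.length_cons] at hp_len
  have hq_len : q.length = k := by omega
  have hw₀a : G.dist w₀ a = k := by
    have h1 : G.dist w₀ a ≤ k := hq_len ▸ SimpleGraph.dist_le q
    have h2 := dist_le_adj hconn hvw₀ a
    omega
  have hw₀b : k ≤ G.dist w₀ b := by
    have := dist_le_adj hconn hvw₀ b
    omega
  have hmw₀ : mfun G a b w₀ = k := by rw [mfun]; omega
  refine ⟨⟨s(v, w₀), hvw₀⟩, by simp, ?_, ?_⟩
  · have hne : (⟨s(v, w₀), hvw₀⟩ : G.edgeSet) ≠ e₀ := by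
      intro h
      have h2 : s(v, w₀) = s(a, b) := by rw [← he₀]; exact congrArg Subtype.val h
      rw [Sym2.eq_iff] at h2
      rcases h2 with ⟨h1, -⟩ | ⟨h1, -⟩
      · exact hva h1
      · exact hvb h1
    rw [gal_eq hconn hab he₀ hne, mu_eq (x := v) (y := w₀) rfl, hmv, hmw₀]
    omega
  · intro e hve hne'
    obtain ⟨w, hw⟩ := Sym2.mem_iff_exists.mp hve
    have hvw : G.Adj v w := by have := e.2; rwa [hw, SimpleGraph.mem_edgeSet] at this
    have hwne : w ≠ w₀ := by
      intro h; apply hne'; apply Subtype.ext; rw [hw, h]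
    have hnee₀ : e ≠ e₀ := by
      intro h
      have h2 : s(v, w) = s(a, b) := by rw [← he₀, ← hw]; exact congrArg Subtype.val h
      rw [Sym2.eq_iff] at h2
      rcases h2 with ⟨h1, -⟩ | ⟨h1, -⟩
      · exact hva h1
      · exact hvb h1
    have hqpath : q.IsPath := ((Walk.cons_isPath_iff hvw₀ q).mp hp_path).1
    have hvq : v ∉ q.support := ((Walk.cons_isPath_iff hvw₀ q).mp hp_path).2
    have hmw : k + 1 ≤ mfun G a b w := by
      by_contra hcon
      push_neg at hcon
      have hlow := mfun_adj hconn (a := a) (b := b) hvw.symm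
      rw [hmv] at hlow
      have hlow2 := mfun_adj hconn (a := a) (b := b) hvw
      rw [hmv] at hlow2
      have hmwk : mfun G a b w = k := by omega
      rcases (by rw [mfun] at hmwk; omega :
          G.dist w a = k ∨ G.dist w b = k) with hwa | hwb
      · -- two distinct paths from v to a : contradiction
        obtain ⟨r, hr_path, hr_len⟩ := (hconn w a).exists_path_of_dist
        rw [hwa] at hr_len
        have hvr : v ∉ r.support := by
          intro hmem
          have h2 := dist_support_le r hmem
          omega
        have hP2 : (Walk.cons hvw r).IsPath := (Walk.cons_isPath_iff hvw r).mpr ⟨hr_path, hvr⟩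
        have heqp := (isAcyclic_iff_path_unique.mp hac) ⟨Walk.cons hvw₀ q, hp_path⟩
          ⟨Walk.cons hvw r, hP2⟩
        have hw_eq : Walk.cons hvw₀ q = Walk.cons hvw r := congrArg Subtype.val heqp
        have hsup := congrArg Walk.support hw_eq
        rw [Walk.support_cons, Walk.support_cons, q.support_eq_cons, r.support_eq_cons] at hsup
        simp only [List.cons.injEq] at hsup
        exact hwne hsup.2.1.symm
      · -- two distinct paths from v to b : contradiction
        obtain ⟨r, hr_path, hr_len⟩ := (hconn w b).exists_path_of_dist
        rw [hwb] at hr_len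
        have hdvb : k + 1 ≤ G.dist v b := by omega
        have hvr : v ∉ r.support := by
          intro hmem
          have h2 := dist_support_le r hmem
          omega
        have hP1 : (Walk.cons hvw r).IsPath := (Walk.cons_isPath_iff hvw r).mpr ⟨hr_path, hvr⟩
        have hbp : b ∉ (Walk.cons hvw₀ q).support := by
          intro hmem
          have ht := Walk.length_takeUntil_le (Walk.cons hvw₀ q) hmem
          have hd : G.dist v b ≤ ((Walk.cons hvw₀ q).takeUntil b hmem).length :=
            SimpleGraph.dist_le _
          have hlen := congrArg Walk.length (Walk.take_spec (Walk.cons hvw₀ q) hmem)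
          rw [Walk.length_append, Walk.length_cons, hq_len] at hlen
          have h0 : ((Walk.cons hvw₀ q).dropUntil b hmem).length = 0 := by omega
          exact hab.ne' (Walk.eq_of_length_eq_zero h0)
        have hP2 : ((Walk.cons hvw₀ q).concat hab).IsPath := by
          rw [← Walk.isPath_reverse_iff, Walk.reverse_concat]
          refine (Walk.cons_isPath_iff _ _).mpr ⟨?_, ?_⟩
          · rw [Walk.isPath_reverse_iff]; exact hp_path
          · simp only [Walk.support_reverse, List.mem_reverse]; exact hbp
        have heqp := (isAcyclic_iff_path_unique.mp hac) ⟨Walk.cons hvw r, hP1⟩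
          ⟨(Walk.cons hvw₀ q).concat hab, hP2⟩
        have hlen := congrArg Walk.length (congrArg Subtype.val heqp)
        rw [Walk.length_cons, Walk.length_concat, Walk.length_cons] at hlen
        omega
    rw [gal_eq hconn hab he₀ hnee₀, mu_eq (x := v) (y := w) hw, hmv]
    omega

lemma S1 (hconn : G.Connected) (hac : G.IsAcyclic) {a b : V} (hab : G.Adj a b)
    {e₀ : G.edgeSet} (he₀ : (e₀ : Sym2 V) = s(a, b)) (v : V) :
    ∃ eh : G.edgeSet, v ∈ (eh : Sym2 V) ∧ G.lineGraph.dist e₀ eh = mfun G a b v ∧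
      ∀ e : G.edgeSet, v ∈ (e : Sym2 V) → e ≠ eh →
        G.lineGraph.dist e₀ e = mfun G a b v + 1 := by
  rcases Nat.eq_zero_or_pos (mfun G a b v) with h0 | hpos
  · refine ⟨e₀, ?_, by rw [h0]; exact gal_self e₀, ?_⟩
    · have hv : v = a ∨ v = b := by
        have h2 : G.dist v a = 0 ∨ G.dist v b = 0 := by rw [mfun] at h0; omega
        rcases h2 with h | h
        · exact Or.inl (hconn.dist_eq_zero_iff.mp h)
        · exact Or.inr (hconn.dist_eq_zero_iff.mp h)
      rw [he₀, Sym2.mem_iff]; exact hv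
    · intro e hve hne
      rw [gal_eq hconn hab he₀ hne, h0]
      have := mu_le (a := a) (b := b) hve
      rw [h0] at this
      omega
  · obtain ⟨k, hk⟩ := Nat.exists_eq_succ_of_ne_zero (Nat.pos_iff_ne_zero.mp hpos)
    rcases le_total (G.dist v a) (G.dist v b) with h | h
    · have hka : G.dist v a = k + 1 := by rw [mfun, min_eq_left h] at hk; exact hk
      rw [hk]
      exact S1' hconn hac hab he₀ v k hka h
    · have hkb : G.dist v b = k + 1 := by rw [mfun, min_eq_right h] at hk; exact hk
      rw [hk]
      have he₀' : (e₀ : Sym2 V) = s(b, a) := by rw [he₀, Sym2.eq_swap]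
      exact S1' hconn hac hab.symm he₀' v k hkb h

end TreeHarmonicAux

namespace TreeHarmonicAux

variable {V : Type*} {G : SimpleGraph V}

lemma incident_set_eq (v : V) :
    {e : G.edgeSet | v ∈ (e : Sym2 V)} = (Subtype.val ⁻¹' (G.incidenceSet v)) := by
  ext e
  simp [SimpleGraph.incidenceSet, e.2]

lemma incident_finite [DecidableEq V] [G.LocallyFinite] (v : V) :
    {e : G.edgeSet | v ∈ (e : Sym2 V)}.Finite := by
  rw [incident_set_eq]
  exact (Set.toFinite (G.incidenceSet v)).preimage Subtype.val_injective.injOn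

lemma incident_card [DecidableEq V] [G.LocallyFinite] (v : V) :
    (incident_finite (G := G) v).toFinset.card = G.degree v := by
  have h1 : {e : G.edgeSet | v ∈ (e : Sym2 V)}.ncard = (G.incidenceSet v).ncard := by
    rw [incident_set_eq]
    exact Set.ncard_preimage_of_injective_subset_range Subtype.val_injective
      (by rw [Subtype.range_val]; exact G.incidenceSet_subset v)
  have h2 : (G.incidenceSet v).ncard = G.degree v := by
    rw [Set.ncard_eq_toFinset_card', Set.toFinset_card,
      SimpleGraph.card_incidenceSet_eq_degree]
  rw [← Set.ncard_eq_toFinset_card _ (incident_finite v), h1, h2]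

lemma finsum_incident [DecidableEq V] [G.LocallyFinite] (f : G.edgeSet → ℝ) (v : V) :
    (∑ᶠ (e : G.edgeSet) (_ : v ∈ (e : Sym2 V)), f e)
      = ∑ e ∈ (incident_finite (G := G) v).toFinset, f e :=
  finsum_mem_eq_finite_toFinset_sum f (incident_finite v)

lemma sum_split {α : Type*} [DecidableEq α] {s : Finset α} {f : α → ℝ} {x : α} (hx : x ∈ s)
    (c : ℝ) (hc : ∀ y ∈ s, y ≠ x → f y = c) :
    ∑ e ∈ s, f e = f x + ((s.card - 1 : ℕ) : ℝ) * c := by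
  rw [← Finset.add_sum_erase s f hx]
  congr 1
  rw [Finset.sum_congr rfl
      (fun y hy => hc y (Finset.mem_of_mem_erase hy) (Finset.ne_of_mem_erase hy)),
    Finset.sum_const, Finset.card_erase_of_mem hx, nsmul_eq_mul]

end TreeHarmonicAux

open TreeHarmonicAux in
/-- In a `(q+1)`-regular tree (`q ≥ 1`), the function
`e ↦ (-1/q)^(d(e₀,e))` is harmonic, and it is the unique harmonic radial function on edges
taking the value `1` at `e₀`. -/
theorem harmonic_radial_edge_function {V : Type*} (q : ℕ) (hq : 1 ≤ q)
    (G : SimpleGraph V) [G.LocallyFinite] (htree : G.IsTree)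
    (hreg : G.IsRegularOfDegree (q + 1)) (e₀ : G.edgeSet) :
    IsHarmonicEdgeFun G (fun e => (-1 / (q : ℝ)) ^ galleryDist G e₀ e) ∧
    (∀ f : G.edgeSet → ℝ,
      IsHarmonicEdgeFun G f →
      (∀ e e' : G.edgeSet, galleryDist G e₀ e = galleryDist G e₀ e' → f e = f e') →
      f e₀ = 1 →
      f = fun e => (-1 / (q : ℝ)) ^ galleryDist G e₀ e) := by
  classical
  obtain ⟨hconn, hac⟩ := htree
  obtain ⟨a, b, he₀, hab⟩ := exists_rep_edge e₀
  have hq0 : (q : ℝ) ≠ 0 := Nat.cast_ne_zero.mpr (by omega)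
  have hgal : ∀ e, galleryDist G e₀ e = G.lineGraph.dist e₀ e := fun _ => rfl
  have hcard : ∀ v : V, (incident_finite (G := G) v).toFinset.card = q + 1 := fun v => by
    rw [incident_card v, hreg v]
  constructor
  · intro v
    obtain ⟨eh, hehv, hehd, hoth⟩ := S1 hconn hac hab he₀ v
    set n := mfun G a b v with hn
    rw [show (∑ᶠ (e : G.edgeSet) (_ : v ∈ (e : Sym2 V)),
          (-1 / (q : ℝ)) ^ galleryDist G e₀ e)
        = ∑ e ∈ (incident_finite (G := G) v).toFinset, (-1 / (q : ℝ)) ^ galleryDist G e₀ e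
      from finsum_incident _ v]
    rw [sum_split ((incident_finite (G := G) v).mem_toFinset.mpr hehv)
      ((-1 / (q : ℝ)) ^ (n + 1))
      (fun y hy hyne => by
        rw [hgal, hoth y ((incident_finite (G := G) v).mem_toFinset.mp hy) hyne])]
    rw [hgal, hehd, hcard v]
    have hqq : ((q + 1 - 1 : ℕ) : ℝ) = (q : ℝ) := by push_cast [Nat.add_sub_cancel]; ring
    rw [hqq, pow_succ]
    field_simp
    ring
  · intro f hf hrad hf0
    funext e
    show f e = (-1 / (q : ℝ)) ^ galleryDist G e₀ e
    rw [hgal]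
    suffices h : ∀ n, ∀ e : G.edgeSet, G.lineGraph.dist e₀ e = n →
        f e = (-1 / (q : ℝ)) ^ n from h _ e rfl
    intro n
    induction n with
    | zero =>
      intro e he
      rw [(gal_eq_zero_iff hconn).mp he, hf0, pow_zero]
    | succ n ih =>
      intro e he
      have hne : e ≠ e₀ := by
        intro h; rw [h, gal_self] at he; omega
      have hmu : mu G a b e = n := by
        have := gal_eq hconn hab he₀ hne; omega
      obtain ⟨v, hv, hmv⟩ := mu_attained (a := a) (b := b) e
      have hmvn : mfun G a b v = n := by rw [hmv, hmu]
      obtain ⟨eh, hehv, hehd, hoth⟩ := S1 hconn hac hab he₀ v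
      rw [hmvn] at hehd hoth
      have hsum := hf v
      rw [show (∑ᶠ (e : G.edgeSet) (_ : v ∈ (e : Sym2 V)), f e)
          = ∑ e ∈ (incident_finite (G := G) v).toFinset, f e
        from finsum_incident f v] at hsum
      rw [sum_split ((incident_finite (G := G) v).mem_toFinset.mpr hehv) (f e)
        (fun y hy hyne => hrad y e (by
          rw [hgal, hgal, he, hoth y ((incident_finite (G := G) v).mem_toFinset.mp hy) hyne]))]
        at hsum
      rw [hcard v] at hsum
      have hqq : ((q + 1 - 1 : ℕ) : ℝ) = (q : ℝ) := by push_cast [Nat.add_sub_cancel]; ring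
      rw [hqq, ih eh hehd] at hsum
      have hx : f e = -(-1 / (q : ℝ)) ^ n / q := by
        field_simp at hsum ⊢
        linarith
      rw [hx, pow_succ]
      field_simp
end

section
/- Let q ≥ 2 be an integer, let X be a (q+1)-regular tree and let e₀ be an edge of X. Then for every real number x with |x| < 1/q, the family (x^{d(e₀,e)}) indexed by all edges e of X is summable, with sum equal to (1 + qx)/(1 − qx). In particular, taking x = −1/q², the sum over all edges e of (−1/q²)^{d(e₀,e)} equals (q − 1)/(q + 1), which is strictly positive (hence nonzero). -/
open SimpleGraph

namespace GalleryAux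

variable {V : Type*} {G : SimpleGraph V}

lemma supp1 {v r w : V} (p : G.Walk v r) (hw : w ∈ p.support) (hne : w ≠ v) :
    G.dist w r + 1 ≤ p.length := by
  classical
  have hs := p.take_spec hw
  have hlen : (p.takeUntil w hw).length + (p.dropUntil w hw).length = p.length := by
    rw [← SimpleGraph.Walk.length_append, hs]
  have h1 : (p.takeUntil w hw).length ≠ 0 := fun h0 =>
    hne (SimpleGraph.Walk.eq_of_length_eq_zero h0).symm
  have h2 : G.dist w r ≤ (p.dropUntil w hw).length := SimpleGraph.dist_le _
  omega

lemma supp2 {v r w : V} (p : G.Walk v r) (hw : w ∈ p.support) (hne : w ≠ r) :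
    G.dist v w + 1 ≤ p.length := by
  classical
  have hs := p.take_spec hw
  have hlen : (p.takeUntil w hw).length + (p.dropUntil w hw).length = p.length := by
    rw [← SimpleGraph.Walk.length_append, hs]
  have h1 : (p.dropUntil w hw).length ≠ 0 := fun h0 =>
    hne (SimpleGraph.Walk.eq_of_length_eq_zero h0)
  have h2 : G.dist v w ≤ (p.takeUntil w hw).length := SimpleGraph.dist_le _
  omega

lemma isPath_concat {u v w : V} {p : G.Walk u v} (hp : p.IsPath) (h : G.Adj v w)
    (hw : w ∉ p.support) : (p.concat h).IsPath := by
  rw [SimpleGraph.Walk.isPath_def, SimpleGraph.Walk.support_concat]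
  rw [List.nodup_append]
  exact ⟨hp.support_nodup, List.nodup_singleton w, fun a ha b hb hab => hw (by rw [List.mem_singleton] at hb; rw [← hb, ← hab]; exact ha)⟩

/-- In a tree, adjacent vertices have different distances to any fixed vertex. -/
lemma dist_ne_of_adj (ht : G.IsTree) {r u v : V} (h : G.Adj u v) :
    G.dist r u ≠ G.dist r v := by
  intro heq
  have hc := ht.isConnected
  obtain ⟨p, hp, hpl⟩ := hc.exists_path_of_dist u r
  obtain ⟨q, hq, hql⟩ := hc.exists_path_of_dist v r
  have hur : G.dist u r = G.dist r u := SimpleGraph.dist_comm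
  have hvr' : G.dist v r = G.dist r v := SimpleGraph.dist_comm
  by_cases hvr : v = r
  · have h0 : G.dist r u = 0 := by rw [heq, hvr, SimpleGraph.dist_self]
    have h1 : r = u := hc.dist_eq_zero_iff.1 h0
    rw [hvr, ← h1] at h
    exact G.irrefl h
  · have hvp : v ∉ p.support := by
      intro hv
      have h1 := supp1 p hv h.ne'
      rw [hpl] at h1
      omega
    have hcons : (SimpleGraph.Walk.cons h.symm p).IsPath := hp.cons hvp
    have huniq := (ht.existsUnique_path v r).unique hcons hq
    have hlen := congrArg SimpleGraph.Walk.length huniq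
    rw [SimpleGraph.Walk.length_cons, hpl, hql] at hlen
    omega

variable {V : Type*} {G : SimpleGraph V}

/-- Level of a vertex with respect to a base edge `{a,b}`. -/
noncomputable def lvl (G : SimpleGraph V) (a b v : V) : ℕ := min (G.dist a v) (G.dist b v)

lemma lvl_comm (a b v : V) : lvl G a b v = lvl G b a v := min_comm _ _

lemma lvl_le_dist_left (a b v : V) : lvl G a b v ≤ G.dist a v := min_le_left _ _
lemma lvl_le_dist_right (a b v : V) : lvl G a b v ≤ G.dist b v := min_le_right _ _

lemma dist_lvl (ht : G.IsTree) {a b : V} (hab : G.Adj a b) (v : V) :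
    (G.dist a v = lvl G a b v ∧ G.dist b v = lvl G a b v + 1) ∨
    (G.dist b v = lvl G a b v ∧ G.dist a v = lvl G a b v + 1) := by
  have hc := ht.isConnected
  have hne : G.dist v a ≠ G.dist v b := dist_ne_of_adj ht hab
  have c1 : G.dist v a = G.dist a v := SimpleGraph.dist_comm
  have c2 : G.dist v b = G.dist b v := SimpleGraph.dist_comm
  have hab1 : G.dist a b = 1 := (SimpleGraph.dist_eq_one_iff_adj).2 hab
  have hba1 : G.dist b a = 1 := (SimpleGraph.dist_eq_one_iff_adj).2 hab.symm
  have t1 : G.dist a v ≤ G.dist a b + G.dist b v := hc.dist_triangle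
  have t2 : G.dist b v ≤ G.dist b a + G.dist a v := hc.dist_triangle
  unfold lvl
  omega

lemma lvl_lip (hc : G.Connected) {a b u v : V} (huv : G.Adj u v) :
    lvl G a b v ≤ lvl G a b u + 1 := by
  have h1 : G.dist u v = 1 := (SimpleGraph.dist_eq_one_iff_adj).2 huv
  have t1 : G.dist a v ≤ G.dist a u + G.dist u v := hc.dist_triangle
  have t2 : G.dist b v ≤ G.dist b u + G.dist u v := hc.dist_triangle
  unfold lvl
  omega

lemma lvl_zero_iff (hc : G.Connected) {a b : V} (v : V) :
    lvl G a b v = 0 ↔ v = a ∨ v = b := by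
  unfold lvl
  constructor
  · intro h
    rcases Nat.min_eq_zero_iff.1 h with h' | h'
    · exact Or.inl (hc.dist_eq_zero_iff.1 h').symm
    · exact Or.inr (hc.dist_eq_zero_iff.1 h').symm
  · rintro (rfl | rfl)
    · simp [SimpleGraph.dist_self]
    · simp [SimpleGraph.dist_self]

lemma lvl_self_left (a b : V) : lvl G a b a = 0 := by simp [lvl, SimpleGraph.dist_self]
lemma lvl_self_right (a b : V) : lvl G a b b = 0 := by simp [lvl, SimpleGraph.dist_self]

lemma mixed_aux (ht : G.IsTree) {r s u v : V} (hrs : G.Adj r s) (huv : G.Adj u v) {k : ℕ}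
    (hk : 1 ≤ k)
    (h1 : G.dist r u = k) (h2 : G.dist s u = k + 1)
    (h3 : G.dist s v = k) (h4 : G.dist r v = k + 1) : False := by
  have hc := ht.isConnected
  obtain ⟨p, hp, hpl⟩ := hc.exists_path_of_dist u r
  obtain ⟨q, hq, hql⟩ := hc.exists_path_of_dist v s
  have hpl' : p.length = k := by rw [hpl, SimpleGraph.dist_comm]; exact h1
  have hql' : q.length = k := by rw [hql, SimpleGraph.dist_comm]; exact h3
  have hw1 : (SimpleGraph.Walk.cons huv.symm p).IsPath := by
    refine hp.cons fun hv => ?_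
    have := supp1 p hv huv.ne'
    rw [hpl', SimpleGraph.dist_comm] at this
    omega
  have hw2 : (q.concat hrs.symm).IsPath := by
    refine isPath_concat hq hrs.symm fun hr => ?_
    have := supp2 q hr hrs.ne
    rw [hql', SimpleGraph.dist_comm] at this
    omega
  have huniq := (ht.existsUnique_path v r).unique hw1 hw2
  have hu1 : u ∈ (SimpleGraph.Walk.cons huv.symm p).support := by
    rw [SimpleGraph.Walk.support_cons]
    exact List.mem_cons_of_mem _ p.start_mem_support
  rw [huniq, SimpleGraph.Walk.support_concat] at hu1
  rw [List.mem_append, List.mem_singleton] at hu1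
  rcases hu1 with hu2 | hu2
  · have := supp1 q hu2 huv.ne
    rw [hql', SimpleGraph.dist_comm] at this
    omega
  · rw [hu2] at h1
    rw [SimpleGraph.dist_self] at h1
    omega

lemma lvl_ne_of_adj (ht : G.IsTree) {a b u v : V} (hab : G.Adj a b) (huv : G.Adj u v)
    (hne : s(u, v) ≠ s(a, b)) : lvl G a b u ≠ lvl G a b v := by
  intro heq
  have hc := ht.isConnected
  rcases dist_lvl ht hab u with ⟨hu1, hu2⟩ | ⟨hu1, hu2⟩ <;>
    rcases dist_lvl ht hab v with ⟨hv1, hv2⟩ | ⟨hv1, hv2⟩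
  · exact dist_ne_of_adj ht (r := a) huv (by omega)
  · by_cases hk : 1 ≤ lvl G a b u
    · exact mixed_aux ht hab huv hk hu1 (by omega) (by omega) (by omega)
    · have hk0 : lvl G a b u = 0 := by omega
      have hua : a = u := hc.dist_eq_zero_iff.1 (by omega)
      have hvb : b = v := hc.dist_eq_zero_iff.1 (by omega)
      exact hne (by rw [← hua, ← hvb])
  · by_cases hk : 1 ≤ lvl G a b u
    · exact mixed_aux ht hab.symm huv hk hu1 (by omega) (by omega) (by omega)
    · have hub : b = u := hc.dist_eq_zero_iff.1 (by omega)
      have hva : a = v := hc.dist_eq_zero_iff.1 (by omega)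
      refine hne ?_
      rw [← hub, ← hva, Sym2.eq_swap]
  · exact dist_ne_of_adj ht (r := b) huv (by omega)

lemma same_aux (ht : G.IsTree) {r v w w' : V} (h1 : G.Adj v w) (h2 : G.Adj v w') {k : ℕ}
    (hw : G.dist r w = k) (hw' : G.dist r w' = k) (hv : k + 1 ≤ G.dist r v) : w = w' := by
  have hc := ht.isConnected
  obtain ⟨p, hp, hpl⟩ := hc.exists_path_of_dist w r
  obtain ⟨q, hq, hql⟩ := hc.exists_path_of_dist w' r
  have hpl' : p.length = k := by rw [hpl, SimpleGraph.dist_comm]; exact hw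
  have hql' : q.length = k := by rw [hql, SimpleGraph.dist_comm]; exact hw'
  have hw1 : (SimpleGraph.Walk.cons h1 p).IsPath := by
    refine hp.cons fun hvs => ?_
    have := supp1 p hvs h1.ne
    rw [hpl', SimpleGraph.dist_comm] at this
    omega
  have hw2 : (SimpleGraph.Walk.cons h2 q).IsPath := by
    refine hq.cons fun hvs => ?_
    have := supp1 q hvs h2.ne
    rw [hql', SimpleGraph.dist_comm] at this
    omega
  have huniq := (ht.existsUnique_path v r).unique hw1 hw2
  have hsupp := congrArg SimpleGraph.Walk.support huniq
  rw [SimpleGraph.Walk.support_cons, SimpleGraph.Walk.support_cons,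
    p.support_eq_cons, q.support_eq_cons] at hsupp
  obtain ⟨-, h⟩ := List.cons_eq_cons.1 hsupp
  exact (List.cons_eq_cons.1 h).1

lemma mixed_parent_aux (ht : G.IsTree) {r s v w w' : V} (hrs : G.Adj r s)
    (h1 : G.Adj v w) (h2 : G.Adj v w') {k : ℕ}
    (hw : G.dist r w = k) (hw' : G.dist s w' = k) (hwr : G.dist r w' = k + 1)
    (hvr : k + 1 ≤ G.dist r v) (hvs : k + 1 ≤ G.dist s v) : False := by
  have hc := ht.isConnected
  obtain ⟨p, hp, hpl⟩ := hc.exists_path_of_dist w r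
  obtain ⟨q, hq, hql⟩ := hc.exists_path_of_dist w' s
  have hpl' : p.length = k := by rw [hpl, SimpleGraph.dist_comm]; exact hw
  have hql' : q.length = k := by rw [hql, SimpleGraph.dist_comm]; exact hw'
  have hw1 : (SimpleGraph.Walk.cons h1 p).IsPath := by
    refine hp.cons fun hvs' => ?_
    have := supp1 p hvs' h1.ne
    rw [hpl', SimpleGraph.dist_comm] at this
    omega
  have hcq : (SimpleGraph.Walk.cons h2 q).IsPath := by
    refine hq.cons fun hvs' => ?_
    have := supp1 q hvs' h2.ne
    rw [hql', SimpleGraph.dist_comm] at this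
    omega
  have hw2 : ((SimpleGraph.Walk.cons h2 q).concat hrs.symm).IsPath := by
    refine isPath_concat hcq hrs.symm fun hr => ?_
    rw [SimpleGraph.Walk.support_cons] at hr
    rcases List.mem_cons.1 hr with hr | hr
    · rw [← hr] at hvr
      rw [SimpleGraph.dist_self] at hvr
      omega
    · have := supp2 q hr hrs.ne
      rw [hql', SimpleGraph.dist_comm] at this
      omega
  have huniq := (ht.existsUnique_path v r).unique hw1 hw2
  have hlen := congrArg SimpleGraph.Walk.length huniq
  rw [SimpleGraph.Walk.length_cons, SimpleGraph.Walk.length_concat,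
    SimpleGraph.Walk.length_cons, hpl', hql'] at hlen
  omega

lemma parent_unique (ht : G.IsTree) {a b v w w' : V} (hab : G.Adj a b)
    (h1 : G.Adj v w) (h2 : G.Adj v w')
    (hw : lvl G a b w + 1 = lvl G a b v) (hw' : lvl G a b w' + 1 = lvl G a b v) :
    w = w' := by
  set k := lvl G a b w with hk
  have hkw' : lvl G a b w' = k := by omega
  have hva : k + 1 ≤ G.dist a v := hw ▸ lvl_le_dist_left a b v
  have hvb : k + 1 ≤ G.dist b v := hw ▸ lvl_le_dist_right a b v
  rcases dist_lvl ht hab w with ⟨hu1, hu2⟩ | ⟨hu1, hu2⟩ <;>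
    rcases dist_lvl ht hab w' with ⟨hv1, hv2⟩ | ⟨hv1, hv2⟩
  · exact same_aux ht h1 h2 (by omega) (by omega) hva
  · exact absurd (mixed_parent_aux ht hab h1 h2 (k := k)
      (by omega) (by omega) (by omega) hva hvb) (by simp)
  · exact absurd (mixed_parent_aux ht hab.symm h1 h2 (k := k)
      (by omega) (by omega) (by omega) hvb hva) (by simp)
  · exact same_aux ht h1 h2 (r := b) (by omega) (by omega) hvb

lemma dist_step (hc : G.Connected) {r v : V} {k : ℕ} (hd : G.dist r v = k + 1) :
    ∃ w, G.Adj v w ∧ G.dist r w = k := by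
  obtain ⟨p, hp, hpl⟩ := hc.exists_path_of_dist v r
  have hpl' : p.length = k + 1 := by rw [hpl, SimpleGraph.dist_comm]; exact hd
  cases p with
  | nil => simp at hpl'
  | @cons _ w _ h q =>
    refine ⟨w, h, ?_⟩
    rw [SimpleGraph.Walk.length_cons] at hpl'
    have hle : G.dist r w ≤ k := by
      have := SimpleGraph.dist_le q
      rw [SimpleGraph.dist_comm]
      omega
    have htri : G.dist r v ≤ G.dist r w + 1 := by
      have t := hc.dist_triangle (u := r) (v := w) (w := v)
      have : G.dist w v = 1 := (SimpleGraph.dist_eq_one_iff_adj).2 h.symm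
      omega
    omega

lemma parent_exists (ht : G.IsTree) {a b v : V} (hab : G.Adj a b)
    (hv : 1 ≤ lvl G a b v) : ∃ w, G.Adj v w ∧ lvl G a b w + 1 = lvl G a b v := by
  have hc := ht.isConnected
  obtain ⟨k, hk⟩ : ∃ k, lvl G a b v = k + 1 := ⟨lvl G a b v - 1, by omega⟩
  rcases dist_lvl ht hab v with ⟨h1, h2⟩ | ⟨h1, h2⟩
  · obtain ⟨w, hvw, hw⟩ := dist_step hc (r := a) (by rw [h1, hk] : G.dist a v = k + 1)
    refine ⟨w, hvw, ?_⟩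
    have hle : lvl G a b w ≤ k := hw ▸ lvl_le_dist_left a b w
    have := lvl_lip hc (a := a) (b := b) hvw.symm
    omega
  · obtain ⟨w, hvw, hw⟩ := dist_step hc (r := b) (by rw [h1, hk] : G.dist b v = k + 1)
    refine ⟨w, hvw, ?_⟩
    have hle : lvl G a b w ≤ k := hw ▸ lvl_le_dist_right a b w
    have := lvl_lip hc (a := a) (b := b) hvw.symm
    omega

lemma lvl_adj_cases (ht : G.IsTree) {a b v w : V} (hab : G.Adj a b)
    (hv : 1 ≤ lvl G a b v) (hw : G.Adj v w) :
    lvl G a b w + 1 = lvl G a b v ∨ lvl G a b w = lvl G a b v + 1 := by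
  have hc := ht.isConnected
  have l1 := lvl_lip hc (a := a) (b := b) hw
  have l2 := lvl_lip hc (a := a) (b := b) hw.symm
  have hne : s(v, w) ≠ s(a, b) := by
    intro h
    rcases Sym2.eq_iff.1 h with ⟨rfl, rfl⟩ | ⟨rfl, rfl⟩
    · rw [lvl_self_left] at hv; omega
    · rw [lvl_self_right] at hv; omega
  have := lvl_ne_of_adj ht hab hw hne
  omega

lemma sfin (ht : G.IsTree) {a b : V} (hab : G.Adj a b) [G.LocallyFinite] :
    ∀ k, {v | lvl G a b v = k}.Finite := by
  intro k
  induction k with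
  | zero =>
    refine Set.Finite.subset ((Set.finite_singleton b).insert a) ?_
    intro v hv
    rcases (lvl_zero_iff ht.isConnected v).1 hv with rfl | rfl <;> simp
  | succ k ih =>
    refine Set.Finite.subset (ih.biUnion fun v _ => (G.neighborSet v).toFinite) ?_
    intro w hw
    simp only [Set.mem_setOf_eq] at hw
    obtain ⟨w', hw', hl⟩ := parent_exists ht hab (v := w) (by omega)
    exact Set.mem_biUnion (by simp only [Set.mem_setOf_eq]; omega) hw'.symm

lemma card_lvl_one (ht : G.IsTree) {a b : V} (hab : G.Adj a b) [G.LocallyFinite] {q : ℕ}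
    (hreg : G.IsRegularOfDegree (q + 1)) :
    {v | lvl G a b v = 1}.ncard = 2 * q := by
  classical
  have hc := ht.isConnected
  have hfin := sfin ht hab 1
  rw [Set.ncard_eq_toFinset_card _ hfin]
  have lvl1 : ∀ w, G.Adj a w → w ≠ b → lvl G a b w = 1 := by
    intro w hadj hne
    have hd : G.dist a w = 1 := (SimpleGraph.dist_eq_one_iff_adj).2 hadj
    have hle : lvl G a b w ≤ 1 := le_trans (lvl_le_dist_left a b w) (le_of_eq hd)
    have hn0 : lvl G a b w ≠ 0 := by
      intro h0
      rcases (lvl_zero_iff hc w).1 h0 with rfl | rfl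
      · exact G.irrefl hadj
      · exact hne rfl
    omega
  have lvl1' : ∀ w, G.Adj b w → w ≠ a → lvl G a b w = 1 := by
    intro w hadj hne
    have hd : G.dist b w = 1 := (SimpleGraph.dist_eq_one_iff_adj).2 hadj
    have hle : lvl G a b w ≤ 1 := le_trans (lvl_le_dist_right a b w) (le_of_eq hd)
    have hn0 : lvl G a b w ≠ 0 := by
      intro h0
      rcases (lvl_zero_iff hc w).1 h0 with rfl | rfl
      · exact hne rfl
      · exact G.irrefl hadj
    omega
  have hset : hfin.toFinset = (G.neighborFinset a \ {b}) ∪ (G.neighborFinset b \ {a}) := by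
    ext w
    simp only [Set.Finite.mem_toFinset, Set.mem_setOf_eq, Finset.mem_union, Finset.mem_sdiff,
      Finset.mem_singleton, mem_neighborFinset]
    constructor
    · intro h
      rcases dist_lvl ht hab w with ⟨h1, h2⟩ | ⟨h1, h2⟩
      · left
        refine ⟨(SimpleGraph.dist_eq_one_iff_adj).1 (by omega), ?_⟩
        rintro rfl
        rw [lvl_self_right] at h; omega
      · right
        refine ⟨(SimpleGraph.dist_eq_one_iff_adj).1 (by omega), ?_⟩
        rintro rfl
        rw [lvl_self_left] at h; omega
    · rintro (⟨hadj, hne⟩ | ⟨hadj, hne⟩)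
      · exact lvl1 w hadj hne
      · exact lvl1' w hadj hne
  have hdisj : Disjoint (G.neighborFinset a \ {b}) (G.neighborFinset b \ {a}) := by
    rw [Finset.disjoint_left]
    intro w hw hw'
    simp only [Finset.mem_sdiff, Finset.mem_singleton, mem_neighborFinset] at hw hw'
    have h1 : lvl G a b w = 1 := lvl1 w hw.1 hw.2
    have := parent_unique ht hab (v := w) hw.1.symm hw'.1.symm
      (by rw [lvl_self_left]; omega) (by rw [lvl_self_right]; omega)
    exact hab.ne this
  rw [hset, Finset.card_union_of_disjoint hdisj]
  have hca : (G.neighborFinset a).card = q + 1 := hreg a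
  have hcb : (G.neighborFinset b).card = q + 1 := hreg b
  have hba : b ∈ G.neighborFinset a := by rw [mem_neighborFinset]; exact hab
  have hab' : a ∈ G.neighborFinset b := by rw [mem_neighborFinset]; exact hab.symm
  rw [Finset.card_sdiff_of_subset (by simpa using hba), Finset.card_sdiff_of_subset (by simpa using hab')]
  rw [hca, hcb]
  simp
  omega

lemma card_lvl_step (ht : G.IsTree) {a b : V} (hab : G.Adj a b) [G.LocallyFinite] {q : ℕ}
    (hreg : G.IsRegularOfDegree (q + 1)) {k : ℕ} (hk : 1 ≤ k) :
    {v | lvl G a b v = k + 1}.ncard = q * {v | lvl G a b v = k}.ncard := by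
  classical
  have hc := ht.isConnected
  have hfk := sfin ht hab k
  have hfk1 := sfin ht hab (k + 1)
  rw [Set.ncard_eq_toFinset_card _ hfk, Set.ncard_eq_toFinset_card _ hfk1]
  have hdisj : ∀ v ∈ hfk.toFinset, ∀ v' ∈ hfk.toFinset, v ≠ v' →
      Disjoint ((G.neighborFinset v).filter (fun w => lvl G a b w = k + 1))
        ((G.neighborFinset v').filter (fun w => lvl G a b w = k + 1)) := by
    intro v hv v' hv' hne
    simp only [Set.Finite.mem_toFinset, Set.mem_setOf_eq] at hv hv'
    rw [Finset.disjoint_left]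
    intro w hw hw'
    simp only [Finset.mem_filter, mem_neighborFinset] at hw hw'
    exact hne (parent_unique ht hab (v := w) hw.1.symm hw'.1.symm (by omega) (by omega))
  have hT : hfk1.toFinset = hfk.toFinset.biUnion
      (fun v => (G.neighborFinset v).filter (fun w => lvl G a b w = k + 1)) := by
    ext w
    simp only [Set.Finite.mem_toFinset, Set.mem_setOf_eq, Finset.mem_biUnion, Finset.mem_filter,
      mem_neighborFinset]
    constructor
    · intro h
      obtain ⟨w', hw', hl⟩ := parent_exists ht hab (v := w) (by omega)
      exact ⟨w', by omega, hw'.symm, h⟩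
    · rintro ⟨v, hv, hadj, h⟩
      exact h
  rw [hT, Finset.card_biUnion hdisj]
  have heach : ∀ v ∈ hfk.toFinset,
      ((G.neighborFinset v).filter (fun w => lvl G a b w = k + 1)).card = q := by
    intro v hv
    simp only [Set.Finite.mem_toFinset, Set.mem_setOf_eq] at hv
    obtain ⟨p, hp1, hp2⟩ := parent_exists ht hab (v := v) (by omega)
    have hsplit := Finset.card_filter_add_card_filter_not
      (s := G.neighborFinset v) (p := fun w => lvl G a b w = k + 1)
    have hneg : (G.neighborFinset v).filter (fun w => ¬ lvl G a b w = k + 1) = {p} := by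
      ext w
      simp only [Finset.mem_filter, mem_neighborFinset, Finset.mem_singleton]
      constructor
      · rintro ⟨hadj, hnee⟩
        rcases lvl_adj_cases ht hab (by omega) hadj with h | h
        · exact parent_unique ht hab hadj hp1 (by omega) (by omega)
        · exact absurd (by omega : lvl G a b w = k + 1) hnee
      · rintro rfl
        exact ⟨hp1, by omega⟩
    have hcard : (G.neighborFinset v).card = q + 1 := hreg v
    rw [hneg, Finset.card_singleton] at hsplit
    omega
  rw [Finset.sum_congr rfl heach, Finset.sum_const, smul_eq_mul, mul_comm]

lemma card_lvl (ht : G.IsTree) {a b : V} (hab : G.Adj a b) [G.LocallyFinite] {q : ℕ}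
    (hreg : G.IsRegularOfDegree (q + 1)) (k : ℕ) :
    {v | lvl G a b v = k + 1}.ncard = 2 * q ^ (k + 1) := by
  induction k with
  | zero => simpa using card_lvl_one ht hab hreg
  | succ k ih =>
    rw [card_lvl_step ht hab hreg (by omega), ih]
    ring

noncomputable def elvl (G : SimpleGraph V) (a b : V) (s : Sym2 V) : ℕ :=
  Sym2.lift ⟨fun u v => max (lvl G a b u) (lvl G a b v), fun u v => max_comm _ _⟩ s

@[simp] lemma elvl_mk (a b u v : V) :
    elvl G a b s(u, v) = max (lvl G a b u) (lvl G a b v) := rfl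

lemma lvl_le_elvl (a b : V) {s : Sym2 V} {w : V} (hw : w ∈ s) :
    lvl G a b w ≤ elvl G a b s := by
  induction s using Sym2.ind with
  | _ u v =>
    rw [Sym2.mem_iff] at hw
    rcases hw with rfl | rfl
    · exact le_max_left _ _
    · exact le_max_right _ _

lemma elvl_le_of_mem (hc : G.Connected) (a b : V) {s : Sym2 V} (hs : s ∈ G.edgeSet)
    {c : V} (hcm : c ∈ s) {n : ℕ} (hn : lvl G a b c ≤ n) : elvl G a b s ≤ n + 1 := by
  induction s using Sym2.ind with
  | _ u v =>
    rw [SimpleGraph.mem_edgeSet] at hs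
    rw [Sym2.mem_iff] at hcm
    rw [elvl_mk]
    rcases hcm with rfl | rfl
    · refine max_le (by omega) ?_
      have := lvl_lip hc (a := a) (b := b) hs
      omega
    · refine max_le ?_ (by omega)
      have := lvl_lip hc (a := a) (b := b) hs.symm
      omega

lemma elvl_adj_step (hc : G.Connected) (a b : V) {e f : G.edgeSet}
    (h : G.lineGraph.Adj e f) : elvl G a b f.val ≤ elvl G a b e.val + 1 := by
  obtain ⟨hne, c, hce, hcf⟩ := lineGraph_adj_iff_exists.1 h
  exact elvl_le_of_mem hc a b f.2 hcf (lvl_le_elvl a b hce)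

lemma elvl_walk (hc : G.Connected) (a b : V) {e f : G.edgeSet}
    (p : G.lineGraph.Walk e f) : elvl G a b f.val ≤ elvl G a b e.val + p.length := by
  induction p with
  | nil => simp
  | cons h q ih =>
    have := elvl_adj_step hc a b h
    rw [SimpleGraph.Walk.length_cons]
    omega

lemma exists_gallery_walk (ht : G.IsTree) {a b : V} (hab : G.Adj a b)
    (P : V → V) (hP : ∀ v, 1 ≤ lvl G a b v → G.Adj v (P v) ∧ lvl G a b (P v) + 1 = lvl G a b v)
    (e₀ : G.edgeSet) (he₀ : (e₀ : Sym2 V) = s(a, b)) :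
    ∀ k v, lvl G a b v = k + 1 → ∀ (e : G.edgeSet), (e : Sym2 V) = s(v, P v) →
      ∃ p : G.lineGraph.Walk e e₀, p.length = k + 1 := by
  intro k
  induction k with
  | zero =>
    intro v hv e he
    have hp := hP v (by omega)
    have hmem : P v = a ∨ P v = b := (lvl_zero_iff ht.isConnected _).1 (by omega)
    have hne : e ≠ e₀ := by
      intro heq
      have h2 : s(v, P v) = s(a, b) := by rw [← he, heq, he₀]
      have h0 : lvl G a b v = 0 := by
        rcases Sym2.eq_iff.1 h2 with ⟨h1, -⟩ | ⟨h1, -⟩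
        · rw [h1]; exact lvl_self_left a b
        · rw [h1]; exact lvl_self_right a b
      omega
    have hadj : G.lineGraph.Adj e e₀ := by
      rw [lineGraph_adj_iff_exists]
      refine ⟨hne, P v, by rw [he]; exact Sym2.mem_mk_right _ _, ?_⟩
      rw [he₀]
      rcases hmem with h | h
      · rw [h]; exact Sym2.mem_mk_left _ _
      · rw [h]; exact Sym2.mem_mk_right _ _
    exact ⟨SimpleGraph.Walk.cons hadj SimpleGraph.Walk.nil, by simp⟩
  | succ k ih =>
    intro v hv e he
    have hpv := hP v (by omega)
    have hlpv : lvl G a b (P v) = k + 1 := by omega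
    have hppv := hP (P v) (by omega)
    have he' : s(P v, P (P v)) ∈ G.edgeSet := (G.mem_edgeSet).2 hppv.1
    obtain ⟨p, hp⟩ := ih (P v) hlpv ⟨_, he'⟩ rfl
    have hne : e ≠ (⟨_, he'⟩ : G.edgeSet) := by
      intro heq
      have h2 : s(v, P v) = s(P v, P (P v)) := by rw [← he, heq]
      rcases Sym2.eq_iff.1 h2 with ⟨h1, -⟩ | ⟨h1, -⟩
      · have := hpv.2
        rw [← h1] at this
        omega
      · rw [h1] at hv
        omega
    have hadj : G.lineGraph.Adj e ⟨_, he'⟩ := by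
      rw [lineGraph_adj_iff_exists]
      exact ⟨hne, P v, by rw [he]; exact Sym2.mem_mk_right _ _, Sym2.mem_mk_left _ _⟩
    exact ⟨SimpleGraph.Walk.cons hadj p, by simp [hp]⟩

lemma edge_rep (e : G.edgeSet) : ∃ u v, G.Adj u v ∧ (e : Sym2 V) = s(u, v) := by
  obtain ⟨s, hs⟩ := e
  induction s using Sym2.ind with
  | _ u v => exact ⟨u, v, hs, rfl⟩

lemma classify (ht : G.IsTree) {a b : V} (hab : G.Adj a b)
    (P : V → V) (hP : ∀ v, 1 ≤ lvl G a b v → G.Adj v (P v) ∧ lvl G a b (P v) + 1 = lvl G a b v)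
    (e₀ : G.edgeSet) (he₀ : (e₀ : Sym2 V) = s(a, b)) (e : G.edgeSet) :
    e = e₀ ∨ ∃ v, 1 ≤ lvl G a b v ∧ (e : Sym2 V) = s(v, P v) := by
  by_cases heq : e = e₀
  · exact Or.inl heq
  right
  obtain ⟨u, v, huv, he⟩ := edge_rep e
  have hne : s(u, v) ≠ s(a, b) := by
    intro h
    exact heq (Subtype.ext (by rw [he, h, ← he₀]))
  have h1 := lvl_ne_of_adj ht hab huv hne
  have l1 := lvl_lip ht.isConnected (a := a) (b := b) huv
  have l2 := lvl_lip ht.isConnected (a := a) (b := b) huv.symm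
  rcases (by omega : lvl G a b u + 1 = lvl G a b v ∨ lvl G a b v + 1 = lvl G a b u) with h | h
  · refine ⟨v, by omega, ?_⟩
    have hu : u = P v := parent_unique ht hab huv.symm (hP v (by omega)).1 h
      (hP v (by omega)).2
    rw [he, hu]
    exact Sym2.eq_swap
  · refine ⟨u, by omega, ?_⟩
    have hv : v = P u := parent_unique ht hab huv (hP u (by omega)).1 h
      (hP u (by omega)).2
    rw [he, hv]

lemma gallery_eq (ht : G.IsTree) {a b : V} (hab : G.Adj a b)
    (P : V → V) (hP : ∀ v, 1 ≤ lvl G a b v → G.Adj v (P v) ∧ lvl G a b (P v) + 1 = lvl G a b v)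
    (e₀ : G.edgeSet) (he₀ : (e₀ : Sym2 V) = s(a, b))
    {v : V} (hv : 1 ≤ lvl G a b v) {e : G.edgeSet} (he : (e : Sym2 V) = s(v, P v)) :
    G.lineGraph.dist e₀ e = lvl G a b v := by
  have hc := ht.isConnected
  obtain ⟨p, hp⟩ := exists_gallery_walk ht hab P hP e₀ he₀ (lvl G a b v - 1) v (by omega) e he
  have hub : G.lineGraph.dist e₀ e ≤ lvl G a b v := by
    have := SimpleGraph.dist_le p.reverse
    rw [SimpleGraph.Walk.length_reverse] at this
    omega
  have hlb : lvl G a b v ≤ G.lineGraph.dist e₀ e := by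
    have hreach : G.lineGraph.Reachable e₀ e := ⟨p.reverse⟩
    obtain ⟨w, hw⟩ := hreach.exists_walk_length_eq_dist
    have hwalk := elvl_walk hc a b w
    have h0 : elvl G a b e₀.val = 0 := by
      rw [he₀, elvl_mk, lvl_self_left, lvl_self_right]
      simp
    have h1 : elvl G a b e.val = lvl G a b v := by
      rw [he, elvl_mk]
      have := (hP v hv).2
      exact max_eq_left (by omega)
    omega
  omega


end GalleryAux

open GalleryAux

/-- In a `(q+1)`-regular tree (`q ≥ 2`), for `|x| < 1/q` the family
`x^(d(e₀,e))` over all edges `e` is summable with sum `(1 + qx)/(1 - qx)`. In particular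
at `x = -1/q²` the sum is `(q-1)/(q+1) > 0`. -/
theorem summable_pow_galleryDist {V : Type*} (q : ℕ) (hq : 2 ≤ q)
    (G : SimpleGraph V) [G.LocallyFinite] (htree : G.IsTree)
    (hreg : G.IsRegularOfDegree (q + 1)) (e₀ : G.edgeSet) :
    (∀ x : ℝ, |x| < 1 / q →
      Summable (fun e : G.edgeSet => x ^ galleryDist G e₀ e) ∧
      ∑' e : G.edgeSet, x ^ galleryDist G e₀ e = (1 + q * x) / (1 - q * x)) ∧
    ∑' e : G.edgeSet, (-1 / (q : ℝ) ^ 2) ^ galleryDist G e₀ e = ((q : ℝ) - 1) / ((q : ℝ) + 1) ∧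
    0 < ((q : ℝ) - 1) / ((q : ℝ) + 1) := by
  classical
  have hc := htree.isConnected
  obtain ⟨a, b, hab, he₀⟩ := edge_rep e₀
  -- the parent function
  have hex : ∀ v : V, ∃ w, 1 ≤ lvl G a b v →
      G.Adj v w ∧ lvl G a b w + 1 = lvl G a b v := by
    intro v
    by_cases h : 1 ≤ lvl G a b v
    · obtain ⟨w, hw⟩ := parent_exists htree hab h
      exact ⟨w, fun _ => hw⟩
    · exact ⟨v, fun h' => absurd h' h⟩
  choose P hP using hex
  set D : G.edgeSet → ℕ := fun e => galleryDist G e₀ e with hD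
  have hD0 : D e₀ = 0 := SimpleGraph.dist_self
  have hDv : ∀ v, 1 ≤ lvl G a b v → ∀ e : G.edgeSet, (e : Sym2 V) = s(v, P v) →
      D e = lvl G a b v := fun v hv e he => gallery_eq htree hab P hP e₀ he₀ hv he
  have hreach : ∀ e : G.edgeSet, G.lineGraph.Reachable e₀ e := by
    intro e
    rcases classify htree hab P hP e₀ he₀ e with heq | ⟨v, hv, he⟩
    · rw [heq]
    · obtain ⟨p, -⟩ := exists_gallery_walk htree hab P hP e₀ he₀
        (lvl G a b v - 1) v (by omega) e he
      exact ⟨p.reverse⟩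
  -- fiber `0` is `{e₀}`
  have hfib0 : D ⁻¹' {0} = {e₀} := by
    ext e
    simp only [Set.mem_preimage, Set.mem_singleton_iff]
    constructor
    · intro h
      exact ((hreach e).dist_eq_zero_iff.1 h).symm
    · rintro rfl
      exact hD0
  -- fibers `k+1`
  have hE : ∀ k : ℕ, Nonempty
      ((D ⁻¹' {(k + 1 : ℕ)}) ≃ {v : V | lvl G a b v = k + 1}) := by
    intro k
    have hlv : ∀ v : {v : V | lvl G a b v = k + 1}, 1 ≤ lvl G a b (v : V) := by
      intro v
      have := v.2
      simp only [Set.mem_setOf_eq] at this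
      omega
    refine ⟨(Equiv.ofBijective (fun v : {v : V | lvl G a b v = k + 1} =>
      (⟨⟨s((v : V), P (v : V)), (G.mem_edgeSet).2 (hP (v : V) (hlv v)).1⟩,
        by
          have h2 : lvl G a b (v : V) = k + 1 := v.2
          simp only [Set.mem_preimage, Set.mem_singleton_iff]
          rw [hDv (v : V) (hlv v) _ rfl, h2]⟩ : (D ⁻¹' {(k + 1 : ℕ)}))) ⟨?_, ?_⟩).symm⟩
    · -- injective
      intro v w hvw
      have h1 : s((v : V), P (v : V)) = s((w : V), P (w : V)) := by
        have h0 := congrArg Subtype.val hvw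
        exact congrArg Subtype.val h0
      rcases Sym2.eq_iff.1 h1 with ⟨h2, -⟩ | ⟨h2, h3⟩
      · exact Subtype.ext h2
      · have hv2 : lvl G a b (v : V) = k + 1 := v.2
        have hw2 : lvl G a b (w : V) = k + 1 := w.2
        have := (hP (w : V) (hlv w)).2
        rw [← h2] at this
        omega
    · -- surjective
      rintro ⟨e, he⟩
      have heD : D e = k + 1 := he
      rcases classify htree hab P hP e₀ he₀ e with rfl | ⟨v, hv, hev⟩
      · rw [hD0] at heD
        omega
      · have hlvv : lvl G a b v = k + 1 := by
          rw [← hDv v hv e hev]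
          exact heD
        exact ⟨⟨v, hlvv⟩, Subtype.ext (Subtype.ext hev.symm)⟩
  have hfinfib : ∀ k : ℕ, Finite (D ⁻¹' {k}) := by
    intro k
    cases k with
    | zero =>
      rw [hfib0]
      infer_instance
    | succ k =>
      have : Finite ({v : V | lvl G a b v = k + 1}) := (sfin htree hab (k + 1)).to_subtype
      exact Finite.of_equiv _ (hE k).some.symm
  have hcard0 : Nat.card (D ⁻¹' {(0 : ℕ)}) = 1 := by
    rw [hfib0, Nat.card_coe_set_eq, Set.ncard_singleton]
  have hcardk : ∀ k : ℕ, Nat.card (D ⁻¹' {(k + 1 : ℕ)}) = 2 * q ^ (k + 1) := by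
    intro k
    rw [Nat.card_congr (hE k).some, Nat.card_coe_set_eq]
    exact card_lvl htree hab hreg k
  have hcard_le : ∀ k : ℕ, Nat.card (D ⁻¹' {k}) ≤ 2 * q ^ k := by
    intro k
    cases k with
    | zero => rw [hcard0]; simp
    | succ k => rw [hcardk k]
  -- the main summation argument
  have main : ∀ x : ℝ, |x| < 1 / q →
      Summable (fun e : G.edgeSet => x ^ D e) ∧
      ∑' e : G.edgeSet, x ^ D e = (1 + q * x) / (1 - q * x) := by
    intro x hx
    have hq0 : (0 : ℝ) < q := by exact_mod_cast (by omega : 0 < q)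
    have hqx : (q : ℝ) * |x| < 1 := by
      have := mul_lt_mul_of_pos_left hx hq0
      rwa [mul_one_div, div_self (ne_of_gt hq0)] at this
    have hqxnn : 0 ≤ (q : ℝ) * |x| := by positivity
    have hnorm : ‖(q : ℝ) * x‖ < 1 := by
      rw [Real.norm_eq_abs, abs_mul, abs_of_nonneg (le_of_lt hq0)]
      exact hqx
    have habs : Summable (fun p : (Σ k : ℕ, D ⁻¹' {k}) => |x| ^ p.1) := by
      rw [summable_sigma_of_nonneg (fun p => pow_nonneg (abs_nonneg x) _)]
      constructor
      · intro k
        haveI := hfinfib k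
        exact Summable.of_finite
      · have hcongr : ∀ k : ℕ, (∑' _ : (D ⁻¹' {k}), |x| ^ k)
            = (Nat.card (D ⁻¹' {k}) : ℝ) * |x| ^ k := by
          intro k
          rw [tsum_const, nsmul_eq_mul]
        refine Summable.of_nonneg_of_le (fun k => ?_) (fun k => ?_)
          ((summable_geometric_of_lt_one hqxnn hqx).mul_left 2)
        · rw [hcongr k]
          positivity
        · rw [hcongr k]
          have hle : (Nat.card (D ⁻¹' {k}) : ℝ) ≤ 2 * (q : ℝ) ^ k := by
            exact_mod_cast hcard_le k
          calc (Nat.card (D ⁻¹' {k}) : ℝ) * |x| ^ k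
              ≤ (2 * (q : ℝ) ^ k) * |x| ^ k :=
                mul_le_mul_of_nonneg_right hle (by positivity)
            _ = 2 * ((q : ℝ) * |x|) ^ k := by rw [mul_pow]; ring
    have hsig : Summable (fun p : (Σ k : ℕ, D ⁻¹' {k}) => x ^ p.1) := by
      refine Summable.of_norm ?_
      simpa [Real.norm_eq_abs, abs_pow] using habs
    have hcomp : ∀ p : (Σ k : ℕ, D ⁻¹' {k}),
        x ^ D ((Equiv.sigmaFiberEquiv D) p) = x ^ p.1 := by
      rintro ⟨k, e, he⟩
      have h : D e = k := he
      simp [Equiv.sigmaFiberEquiv, h]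
    have hsummable : Summable (fun e : G.edgeSet => x ^ D e) := by
      rw [← Equiv.summable_iff (Equiv.sigmaFiberEquiv D)]
      exact Summable.congr hsig (fun p => (hcomp p).symm)
    refine ⟨hsummable, ?_⟩
    have h1 : (∑' e : G.edgeSet, x ^ D e) = ∑' p : (Σ k : ℕ, D ⁻¹' {k}), x ^ p.1 := by
      rw [← Equiv.tsum_eq (Equiv.sigmaFiberEquiv D) (fun e => x ^ D e)]
      exact tsum_congr hcomp
    have h2 : (∑' p : (Σ k : ℕ, D ⁻¹' {k}), x ^ p.1)
        = ∑' k : ℕ, (Nat.card (D ⁻¹' {k}) : ℝ) * x ^ k := by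
      rw [Summable.tsum_sigma hsig]
      refine tsum_congr (fun k => ?_)
      have h : (∑' _ : (D ⁻¹' {k}), x ^ k) = (Nat.card (D ⁻¹' {k}) : ℝ) * x ^ k := by
        rw [tsum_const, nsmul_eq_mul]
      exact h
    have hsum2 : Summable (fun k : ℕ => (Nat.card (D ⁻¹' {k}) : ℝ) * x ^ k) := by
      refine Summable.congr hsig.sigma (fun k => ?_)
      have h : (∑' _ : (D ⁻¹' {k}), x ^ k) = (Nat.card (D ⁻¹' {k}) : ℝ) * x ^ k := by
        rw [tsum_const, nsmul_eq_mul]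
      exact h
    have h3 : (∑' k : ℕ, (Nat.card (D ⁻¹' {k}) : ℝ) * x ^ k)
        = 1 + ∑' k : ℕ, (Nat.card (D ⁻¹' {(k + 1 : ℕ)}) : ℝ) * x ^ (k + 1) := by
      rw [Summable.tsum_eq_zero_add hsum2, hcard0]
      simp
    have h4 : ∀ k : ℕ, (Nat.card (D ⁻¹' {(k + 1 : ℕ)}) : ℝ) * x ^ (k + 1)
        = 2 * ((q : ℝ) * x) ^ (k + 1) := by
      intro k
      rw [hcardk k]
      push_cast
      rw [mul_pow]
      ring
    have h5 : (∑' k : ℕ, (2 : ℝ) * ((q : ℝ) * x) ^ (k + 1))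
        = 2 * (((q : ℝ) * x) * (1 - (q : ℝ) * x)⁻¹) := by
      rw [tsum_mul_left]
      congr 1
      have hps : ∀ k : ℕ, ((q : ℝ) * x) ^ (k + 1) = ((q : ℝ) * x) ^ k * ((q : ℝ) * x) :=
        fun k => pow_succ _ _
      rw [tsum_congr hps, tsum_mul_right, tsum_geometric_of_norm_lt_one hnorm]
      ring
    have hne : (1 : ℝ) - (q : ℝ) * x ≠ 0 := by
      have habs' : |(q : ℝ) * x| < 1 := by
        rw [abs_mul, abs_of_nonneg hq0.le]
        exact hqx
      have := abs_lt.1 habs'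
      intro h0
      nlinarith [this.1, this.2]
    rw [h1, h2, h3, tsum_congr h4, h5]
    field_simp
    ring
  have hq2 : (2 : ℝ) ≤ (q : ℝ) := by exact_mod_cast hq
  have hq0 : (0 : ℝ) < q := by linarith
  refine ⟨fun x hx => main x hx, ?_, ?_⟩
  · have hx : |(-1 : ℝ) / (q : ℝ) ^ 2| < 1 / q := by
      rw [abs_div, abs_neg, abs_one, abs_of_nonneg (by positivity : (0:ℝ) ≤ (q:ℝ)^2)]
      rw [div_lt_div_iff₀ (by positivity) hq0]
      nlinarith
    have := (main ((-1 : ℝ) / (q : ℝ) ^ 2) hx).2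
    rw [this]
    have hqne : (q : ℝ) ≠ 0 := ne_of_gt hq0
    field_simp
    ring
  · apply div_pos <;> linarith
end

section
/- Let E/F be a finite unramified extension of nonarchimedean local fields, with rings of integers 𝔬_F ⊆ 𝔬_E, and let n ≥ 1. For an 𝔬_F-lattice L in F^n, let 𝔬_E·L denote the 𝔬_E-submodule of E^n generated by L (under the natural inclusion F^n ⊆ E^n). If L and L' are 𝔬_F-lattices in F^n and there exists μ ∈ E^× with 𝔬_E·L = μ·(𝔬_E·L'), then there exists λ ∈ F^× with L = λ·L'. In other words, the map [L] ↦ [𝔬_E·L] from homothety classes of 𝔬_F-lattices in F^n to homothety classes of 𝔬_E-lattices in E^n is injective. -/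
set_option linter.unusedSectionVars false


open scoped Pointwise

section UnramifiedBaseChange

/- `F` is a nonarchimedean local field with ring of integers `R`: `R` is a complete DVR
with finite residue field and fraction field `F`; similarly `E` is a nonarchimedean local
field with ring of integers `S`, and `E/F` is a finite extension, compatible with `R → S`. -/
variable (R S F E : Type*)
  [CommRing R] [IsDomain R] [IsDiscreteValuationRing R]
  [Finite (IsLocalRing.ResidueField R)] [IsAdicComplete (IsLocalRing.maximalIdeal R) R]
  [CommRing S] [IsDomain S] [IsDiscreteValuationRing S]
  [Finite (IsLocalRing.ResidueField S)] [IsAdicComplete (IsLocalRing.maximalIdeal S) S]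
  [Field F] [Algebra R F] [IsFractionRing R F]
  [Field E] [Algebra S E] [IsFractionRing S E]
  [Algebra F E] [FiniteDimensional F E]
  [Algebra R S] [Algebra R E] [IsScalarTower R S E] [IsScalarTower R F E]

variable (n : ℕ)

/-- A lattice in `Fⁿ`: a finitely generated `R`-submodule of `Fⁿ` containing an `F`-basis
(equivalently, spanning `Fⁿ` over `F`). -/
def IsLatticeOver (L : Submodule R (Fin n → F)) : Prop :=
  L.FG ∧ Submodule.span F (L : Set (Fin n → F)) = ⊤

/-- The `S = 𝔬_E`-submodule `𝔬_E·L` of `Eⁿ` generated by an `𝔬_F`-lattice `L ⊆ Fⁿ`,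
via the natural inclusion `Fⁿ ⊆ Eⁿ`. -/
def baseChangeLattice (L : Submodule R (Fin n → F)) : Submodule S (Fin n → E) :=
  Submodule.span S
    ((fun x : Fin n → F => fun i => algebraMap F E (x i)) '' (L : Set (Fin n → F)))

/-- The coordinatewise inclusion `Fⁿ → Eⁿ` as an `R`-linear map. -/
noncomputable def incl : (Fin n → F) →ₗ[R] (Fin n → E) :=
  LinearMap.compLeft ((Algebra.linearMap F E).restrictScalars R) (Fin n)

lemma incl_apply (x : Fin n → F) : incl R F E n x = fun i => algebraMap F E (x i) := rfl

lemma incl_smul (a : F) (x : Fin n → F) :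
    incl R F E n (a • x) = algebraMap F E a • incl R F E n x := by
  funext i
  simp [incl_apply, Algebra.smul_def]

lemma aux_mem_range (π : R) (hπ : Irreducible π) (hπS : Irreducible (algebraMap R S π))
    (c : F) (hc : ∃ s : S, algebraMap S E s = algebraMap F E c) :
    ∃ r : R, algebraMap R F r = c := by
  rcases eq_or_ne c 0 with rfl | hc0
  · exact ⟨0, by simp⟩
  obtain ⟨a, b, hb, habc⟩ := IsFractionRing.div_surjective (A := R) c
  have hbF : algebraMap R F b ≠ 0 :=
    IsFractionRing.to_map_ne_zero_of_mem_nonZeroDivisors hb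
  have hb0 : b ≠ 0 := fun h => hbF (by simp [h])
  have ha0 : a ≠ 0 := by
    rintro rfl; exact hc0 (by simpa using habc.symm)
  obtain ⟨p, u1, rfl⟩ := IsDiscreteValuationRing.eq_unit_mul_pow_irreducible ha0 hπ
  obtain ⟨q, u2, rfl⟩ := IsDiscreteValuationRing.eq_unit_mul_pow_irreducible hb0 hπ
  rcases le_or_gt q p with hpq | hpq
  · refine ⟨↑u1 * ↑(u2⁻¹) * π ^ (p - q), ?_⟩
    have hππ : π ^ (p - q) * π ^ q = π ^ p := by rw [← pow_add, Nat.sub_add_cancel hpq]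
    have hmul : (↑u1 * ↑(u2⁻¹) * π ^ (p - q)) * (↑u2 * π ^ q) = ↑u1 * π ^ p := by
      calc (↑u1 * ↑(u2⁻¹) * π ^ (p - q)) * (↑u2 * π ^ q)
          = ↑u1 * ((↑(u2⁻¹) * ↑u2) * (π ^ (p - q) * π ^ q)) := by ring
        _ = ↑u1 * π ^ p := by rw [u2.inv_mul, hππ, one_mul]
    rw [← habc, eq_div_iff hbF, ← map_mul]
    exact congrArg _ hmul
  · exfalso
    obtain ⟨s, hs⟩ := hc
    have key : algebraMap F E c * algebraMap R E (π ^ (q - p)) =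
        algebraMap R E ((u1 * u2⁻¹ : Rˣ) : R) := by
      rw [IsScalarTower.algebraMap_apply R F E, IsScalarTower.algebraMap_apply R F E,
        ← map_mul]
      congr 1
      rw [← habc, div_mul_eq_mul_div, div_eq_iff hbF, ← map_mul, ← map_mul]
      congr 1
      push_cast
      calc (↑u1 * π ^ p) * π ^ (q - p) = ↑u1 * π ^ (p + (q - p)) := by rw [pow_add]; ring
        _ = ↑u1 * (↑(u2⁻¹) * ↑u2) * π ^ q := by
            rw [u2.inv_mul, Nat.add_sub_cancel' hpq.le]; ring
        _ = ↑u1 * ↑(u2⁻¹) * (↑u2 * π ^ q) := by ring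
    have key2 : algebraMap S E (s * (algebraMap R S π) ^ (q - p)) =
        algebraMap S E (algebraMap R S ((u1 * u2⁻¹ : Rˣ) : R)) := by
      rw [map_mul, hs, map_pow, ← IsScalarTower.algebraMap_apply R S E, ← map_pow, key,
        ← IsScalarTower.algebraMap_apply R S E]
    have key3 : s * (algebraMap R S π) ^ (q - p) =
        algebraMap R S ((u1 * u2⁻¹ : Rˣ) : R) :=
      IsFractionRing.injective S E key2
    have hunit : IsUnit (algebraMap R S ((u1 * u2⁻¹ : Rˣ) : R)) :=
      ((u1 * u2⁻¹).isUnit).map _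
    rw [← key3] at hunit
    have hdvd : algebraMap R S π ∣ s * (algebraMap R S π) ^ (q - p) :=
      Dvd.dvd.mul_left (dvd_pow_self _ (by omega)) s
    exact hπS.not_isUnit (isUnit_of_dvd_unit hdvd hunit)

lemma exists_basis_of_lattice (L : Submodule R (Fin n → F))
    (hL : IsLatticeOver R F n L) :
    ∃ v : Fin n → (Fin n → F), Submodule.span R (Set.range v) = L ∧
      ∃ bF : Module.Basis (Fin n) F (Fin n → F), ∀ j, bF j = v j := by
  haveI : Module.Finite R L := Module.Finite.iff_fg.mpr hL.1
  haveI : Module.IsTorsionFree R F :=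
    Module.isTorsionFree_iff_algebraMap_injective.mpr (IsFractionRing.injective R F)
  set ι := Module.Free.ChooseBasisIndex R L
  let b0 : Module.Basis ι R L := Module.Free.chooseBasis R L
  let v0 : ι → (Fin n → F) := (L.subtype : L →ₗ[R] (Fin n → F)) ∘ b0
  have hliR : LinearIndependent R v0 :=
    b0.linearIndependent.map' L.subtype L.ker_subtype
  have hspanR : Submodule.span R (Set.range v0) = L := by
    have : Set.range v0 = L.subtype '' (Set.range b0) := by
      rw [Set.range_comp]
    rw [this, Submodule.span_image, b0.span_eq, Submodule.map_subtype_top]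
  have hliF : LinearIndependent F v0 :=
    hliR.localization F (nonZeroDivisors R)
  have hspF : Submodule.span F (Set.range v0) = ⊤ := by
    rw [eq_top_iff, ← hL.2]
    refine Submodule.span_le.mpr fun x hx => ?_
    have : x ∈ Submodule.span R (Set.range v0) := hspanR.symm ▸ hx
    exact Submodule.span_le_restrictScalars R F _ this
  let bF0 : Module.Basis ι F (Fin n → F) := Module.Basis.mk hliF (by rw [hspF])
  have hcard : Fintype.card ι = n := by
    have h1 := Module.finrank_eq_card_basis bF0
    rw [Module.finrank_fin_fun] at h1
    omega
  let e : ι ≃ Fin n := Fintype.equivFinOfCardEq hcard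
  refine ⟨v0 ∘ e.symm, ?_, bF0.reindex e, fun j => ?_⟩
  · rw [Set.range_comp, e.symm.surjective.range_eq, Set.image_univ, hspanR]
  · rw [Module.Basis.reindex_apply, Module.Basis.mk_apply]
    rfl

lemma mem_baseChange_iff (π : R) (hπ : Irreducible π)
    (hπS : Irreducible (algebraMap R S π))
    (L : Submodule R (Fin n → F)) (hL : IsLatticeOver R F n L) (x : Fin n → F) :
    incl R F E n x ∈ baseChangeLattice R S F E n L ↔ x ∈ L := by
  constructor
  · intro hx
    obtain ⟨v, hspanR, bF, hbF⟩ := exists_basis_of_lattice R F n L hL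
    set w : Fin n → (Fin n → E) := fun j => incl R F E n (v j) with hw
    have hvL : ∀ j, v j ∈ L := fun j =>
      hspanR ▸ Submodule.subset_span (Set.mem_range_self j)
    -- the base change is spanned by `w`
    have hbc : baseChangeLattice R S F E n L = Submodule.span S (Set.range w) := by
      apply le_antisymm
      · refine Submodule.span_le.mpr ?_
        rintro _ ⟨y, hy, rfl⟩
        rw [← hspanR] at hy
        obtain ⟨c, rfl⟩ := (Submodule.mem_span_range_iff_exists_fun R).mp hy
        show incl R F E n (∑ j, c j • v j) ∈ _
        rw [map_sum]
        exact Submodule.sum_mem _ fun j _ => by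
          rw [map_smul]
          exact Submodule.smul_of_tower_mem _ (c j)
            (Submodule.subset_span (Set.mem_range_self j))
      · refine Submodule.span_le.mpr ?_
        rintro _ ⟨j, rfl⟩
        exact Submodule.subset_span ⟨v j, hvL j, rfl⟩
    -- build the `E`-basis `w`
    classical
    have hbFv : ⇑bF = v := funext hbF
    let A : Matrix (Fin n) (Fin n) F := (Pi.basisFun F (Fin n)).toMatrix v
    have hmul : A * bF.toMatrix (Pi.basisFun F (Fin n)) = 1 := by
      rw [show A = (Pi.basisFun F (Fin n)).toMatrix ⇑bF by rw [hbFv]]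
      exact Module.Basis.toMatrix_mul_toMatrix_flip _ _
    have hAdet : IsUnit A.det :=
      IsUnit.of_mul_eq_one (a := A.det) (bF.toMatrix (Pi.basisFun F (Fin n))).det
        (by rw [← Matrix.det_mul, hmul, Matrix.det_one])
    let A' : Matrix (Fin n) (Fin n) E := A.map (algebraMap F E)
    have hA'det : IsUnit A'.det := by
      have : A'.det = algebraMap F E A.det := ((algebraMap F E).map_det A).symm
      rw [this]
      exact hAdet.map _
    have hA'inv : Invertible A' := A'.invertibleOfIsUnitDet hA'det
    let bE : Module.Basis (Fin n) E (Fin n → E) :=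
      (Pi.basisFun E (Fin n)).map (A'.toLinearEquiv' hA'inv)
    have hbE : ∀ j, bE j = w j := by
      intro j
      funext i
      show (A'.toLinearEquiv' hA'inv) ((Pi.basisFun E (Fin n)) j) i = _
      have : ((Pi.basisFun E (Fin n)) j : Fin n → E) = Pi.single j 1 := by
        simp [Pi.basisFun_apply]
      rw [this]
      show (A'.mulVec (Pi.single j 1)) i = _
      rw [Matrix.mulVec_single]
      show A' i j * 1 = w j i
      simp only [A', A, Matrix.map_apply, mul_one, hw, incl_apply]
      rw [Module.Basis.toMatrix_apply, Pi.basisFun_repr]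
    -- coefficients
    rw [hbc] at hx
    obtain ⟨c, hc⟩ := (Submodule.mem_span_range_iff_exists_fun S).mp hx
    set d : Fin n → F := fun i => bF.repr x i with hd
    have hxd : x = ∑ i, d i • v i := by
      conv_lhs => rw [← bF.sum_repr x]
      refine Finset.sum_congr rfl fun i _ => by rw [hbF]
    have h1 : ∑ i, algebraMap S E (c i) • bE i = incl R F E n x := by
      rw [← hc]
      refine Finset.sum_congr rfl fun i _ => ?_
      rw [hbE, algebraMap_smul]
    have h2 : ∑ i, algebraMap F E (d i) • bE i = incl R F E n x := by
      conv_rhs => rw [hxd]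
      rw [map_sum]
      refine Finset.sum_congr rfl fun i _ => ?_
      rw [hbE, incl_smul]
    have hcd : ∀ i, algebraMap S E (c i) = algebraMap F E (d i) := by
      intro i
      have e1 := bE.repr_sum_self (fun i => algebraMap S E (c i))
      have e2 := bE.repr_sum_self (fun i => algebraMap F E (d i))
      rw [h1] at e1
      rw [h2] at e2
      rw [← congrFun e1 i, ← congrFun e2 i]
    have hdR : ∀ i, ∃ r : R, algebraMap R F r = d i := fun i =>
      aux_mem_range R S F E π hπ hπS (d i) ⟨c i, hcd i⟩
    choose r hr using hdR
    rw [← hspanR]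
    refine (Submodule.mem_span_range_iff_exists_fun R).mpr ⟨r, ?_⟩
    rw [hxd]
    refine Finset.sum_congr rfl fun i _ => ?_
    rw [← hr i, algebraMap_smul]
  · intro hx
    exact Submodule.subset_span ⟨x, hx, rfl⟩


lemma unit_smul_set (N : Submodule S (Fin n → E)) (u : Sˣ) :
    (algebraMap S E ↑u) • (N : Set (Fin n → E)) = N := by
  apply Set.Subset.antisymm
  · rintro _ ⟨z, hz, rfl⟩
    show (algebraMap S E ↑u) • z ∈ N
    rw [algebraMap_smul]
    exact N.smul_mem _ hz
  · intro y hy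
    refine ⟨(↑u⁻¹ : S) • y, N.smul_mem _ hy, ?_⟩
    show (algebraMap S E ↑u) • ((↑u⁻¹ : S) • y) = y
    rw [algebraMap_smul, smul_smul, Units.mul_inv, one_smul]

/-- Let `E/F` be a finite unramified extension of nonarchimedean local
fields with rings of integers `R = 𝔬_F ⊆ S = 𝔬_E`. If `L`, `L'` are `𝔬_F`-lattices in `Fⁿ`
whose base changes `𝔬_E·L`, `𝔬_E·L'` are homothetic over `E`, then `L` and `L'` are already
homothetic over `F`; i.e. `[L] ↦ [𝔬_E·L]` is injective on homothety classes. -/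
theorem baseChange_lattice_injective_on_homothety_classes
    (hn : 1 ≤ n) (π : R) (hπ : Irreducible π) (hπS : Irreducible (algebraMap R S π))
    (L L' : Submodule R (Fin n → F))
    (hL : IsLatticeOver R F n L) (hL' : IsLatticeOver R F n L')
    (h : ∃ μ : E, μ ≠ 0 ∧
      (baseChangeLattice R S F E n L : Set (Fin n → E)) =
        μ • (baseChangeLattice R S F E n L' : Set (Fin n → E))) :
    ∃ lam : F, lam ≠ 0 ∧ (L : Set (Fin n → F)) = lam • (L' : Set (Fin n → F)) := by
  obtain ⟨μ, hμ0, hset⟩ := h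
  obtain ⟨a, b, hbnzd, hab⟩ := IsFractionRing.div_surjective (A := S) μ
  have hbE : algebraMap S E b ≠ 0 :=
    IsFractionRing.to_map_ne_zero_of_mem_nonZeroDivisors hbnzd
  have hb0 : b ≠ 0 := fun hh => hbE (by simp [hh])
  have ha0 : a ≠ 0 := by rintro rfl; exact hμ0 (by simpa using hab.symm)
  obtain ⟨p, ua, rfl⟩ := IsDiscreteValuationRing.eq_unit_mul_pow_irreducible ha0 hπS
  obtain ⟨q, ub, rfl⟩ := IsDiscreteValuationRing.eq_unit_mul_pow_irreducible hb0 hπS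
  have hπF : algebraMap R F π ≠ 0 := fun hh =>
    hπ.ne_zero (IsFractionRing.injective R F (by simpa using hh))
  set lam : F := algebraMap R F π ^ p / algebraMap R F π ^ q with hlam
  have hlam0 : lam ≠ 0 := div_ne_zero (pow_ne_zero _ hπF) (pow_ne_zero _ hπF)
  refine ⟨lam, hlam0, ?_⟩
  have hπSE : algebraMap S E (algebraMap R S π) ≠ 0 := fun hh =>
    hπS.ne_zero (IsFractionRing.injective S E (by simpa using hh))
  have hubE : algebraMap S E (↑ub : S) ≠ 0 := fun hh =>
    ub.ne_zero (IsFractionRing.injective S E (by simpa using hh))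
  have hubinv : (algebraMap S E (↑ub : S))⁻¹ = algebraMap S E (↑ub⁻¹ : S) :=
    inv_eq_of_mul_eq_one_right (by rw [← map_mul, Units.mul_inv, map_one])
  have hlamE : algebraMap F E lam =
      algebraMap S E (algebraMap R S π) ^ p / algebraMap S E (algebraMap R S π) ^ q := by
    rw [hlam, map_div₀, map_pow, map_pow, ← IsScalarTower.algebraMap_apply R F E,
      IsScalarTower.algebraMap_apply R S E]
  have hmu : μ = algebraMap S E ((ua * ub⁻¹ : Sˣ) : S) * algebraMap F E lam := by
    rw [← hab, hlamE]
    rw [Units.val_mul, map_mul, map_mul, map_mul, map_pow, map_pow, ← hubinv]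
    field_simp
  have hlamE0 : algebraMap F E lam ≠ 0 := fun hh =>
    hlam0 ((map_eq_zero_iff _ (algebraMap F E).injective).mp hh)
  have hset' : (baseChangeLattice R S F E n L : Set (Fin n → E)) =
      algebraMap F E lam • (baseChangeLattice R S F E n L' : Set (Fin n → E)) := by
    rw [hset, hmu, mul_comm, mul_smul, unit_smul_set]
  apply Set.ext
  intro x
  calc x ∈ (L : Set (Fin n → F)) ↔ incl R F E n x ∈ baseChangeLattice R S F E n L := by
        rw [SetLike.mem_coe, mem_baseChange_iff R S F E n π hπ hπS L hL x]
    _ ↔ incl R F E n x ∈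
          algebraMap F E lam • (baseChangeLattice R S F E n L' : Set (Fin n → E)) := by
        rw [← SetLike.mem_coe, hset']
    _ ↔ (algebraMap F E lam)⁻¹ • incl R F E n x ∈
          (baseChangeLattice R S F E n L' : Set (Fin n → E)) :=
        Set.mem_smul_set_iff_inv_smul_mem₀ hlamE0 _ _
    _ ↔ incl R F E n (lam⁻¹ • x) ∈ baseChangeLattice R S F E n L' := by
        rw [incl_smul, map_inv₀, SetLike.mem_coe]
    _ ↔ lam⁻¹ • x ∈ L' := mem_baseChange_iff R S F E n π hπ hπS L' hL' _
    _ ↔ x ∈ lam • (L' : Set (Fin n → F)) := by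
        rw [Set.mem_smul_set_iff_inv_smul_mem₀ hlam0, SetLike.mem_coe]

end UnramifiedBaseChange
end

section
/- Let K be a nonarchimedean local field with ring of integers 𝔬, maximal ideal 𝔭 and uniformizer π, let n ≥ 1, and let I₀ be the standard Iwahori subgroup of GL(n,K). Call a matrix w ∈ GL(n,K) π-monomial if every row and every column of w contains exactly one nonzero entry and every nonzero entry of w is an integer power of π. Then GL(n,K) is the disjoint union of the double cosets I₀ w I₀ as w runs over the π-monomial matrices; i.e. every g ∈ GL(n,K) lies in I₀ w I₀ for exactly one π-monomial matrix w (the Bruhat–Iwahori decomposition). -/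
open Matrix

section BruhatIwahori

/- `K` is a nonarchimedean local field with ring of integers `R = 𝔬`: `R` is a complete DVR
with finite residue field and fraction field `K`. -/
variable (R K : Type*)
  [CommRing R] [IsDomain R] [IsDiscreteValuationRing R]
  [Finite (IsLocalRing.ResidueField R)] [IsAdicComplete (IsLocalRing.maximalIdeal R) R]
  [Field K] [Algebra R K] [IsFractionRing R K]

variable (n : ℕ)

/-- The standard Iwahori subgroup of `GL(n, K)`: the set of `g ∈ GL(n, 𝔬)` (both `g` and
`g⁻¹` have entries in `𝔬`) whose entries strictly below the diagonal lie in `𝔭`. -/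
def IwahoriSet : Set (GL (Fin n) K) :=
  {g | (∀ i j : Fin n, ∃ r : R, (g : Matrix (Fin n) (Fin n) K) i j = algebraMap R K r) ∧
       (∀ i j : Fin n, ∃ r : R,
         ((g⁻¹ : GL (Fin n) K) : Matrix (Fin n) (Fin n) K) i j = algebraMap R K r) ∧
       (∀ i j : Fin n, (j : ℕ) < (i : ℕ) → ∃ r ∈ IsLocalRing.maximalIdeal R,
         (g : Matrix (Fin n) (Fin n) K) i j = algebraMap R K r)}

/-- A matrix is `π`-monomial if every row and every column has exactly one nonzero entry,
and every nonzero entry is an integer power of `π`. -/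
def IsPiMonomial (π : R) (A : Matrix (Fin n) (Fin n) K) : Prop :=
  (∀ i : Fin n, ∃! j : Fin n, A i j ≠ 0) ∧
  (∀ j : Fin n, ∃! i : Fin n, A i j ≠ 0) ∧
  (∀ i j : Fin n, A i j ≠ 0 → ∃ m : ℤ, A i j = (algebraMap R K π) ^ m)

set_option linter.unusedSectionVars false
set_option maxHeartbeats 1000000

variable {R K} {n}

lemma bi_inj : Function.Injective (algebraMap R K) := IsFractionRing.injective R K

lemma bi_map_ne_zero {r : R} (hr : r ≠ 0) : algebraMap R K r ≠ 0 := by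
  intro h0
  exact hr (bi_inj (by rw [h0, map_zero]))

lemma bi_pi_ne_zero {π : R} (hπ : Irreducible π) : (algebraMap R K π) ≠ 0 :=
  bi_map_ne_zero hπ.ne_zero

lemma bi_unit_ne_zero (u : Rˣ) : (algebraMap R K (u : R)) ≠ 0 :=
  bi_map_ne_zero u.ne_zero

lemma bi_pow_nonneg {π : R} (hπ : Irreducible π) (t : ℤ) (r : R)
    (h : (algebraMap R K π) ^ t = algebraMap R K r) : 0 ≤ t := by
  by_contra ht
  push_neg at ht
  have hπ0 : (algebraMap R K π) ≠ 0 := bi_pi_ne_zero hπ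
  set k : ℕ := (-t).toNat with hk
  have hkpos : 1 ≤ k := by omega
  have h1 : (algebraMap R K π) ^ (k : ℤ) * (algebraMap R K π) ^ t = 1 := by
    rw [← zpow_add₀ hπ0, show (k : ℤ) + t = 0 by omega, zpow_zero]
  have h2 : algebraMap R K (π ^ k * r) = algebraMap R K 1 := by
    rw [_root_.map_mul, map_pow, _root_.map_one, ← h, ← zpow_natCast, h1]
  have h3 : π ^ k * r = 1 := bi_inj h2
  have : IsUnit π := by
    refine IsUnit.of_mul_eq_one (a := π) (π ^ (k - 1) * r) ?_
    calc π * (π ^ (k-1) * r) = π ^ (1 + (k-1)) * r := by ring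
    _ = 1 := by rw [show 1 + (k-1) = k by omega]; exact h3
  exact hπ.not_isUnit this

/-- `x = u · π^m` for a unit `u` of `R`. -/
def bi_HasVal (π : R) (x : K) (m : ℤ) : Prop :=
  ∃ u : Rˣ, x = algebraMap R K u * (algebraMap R K π) ^ m

lemma bi_hasVal_ne_zero {π : R} (hπ : Irreducible π) {x : K} {m : ℤ}
    (h : bi_HasVal π x m) : x ≠ 0 := by
  obtain ⟨u, rfl⟩ := h
  exact mul_ne_zero (bi_unit_ne_zero u) (zpow_ne_zero _ (bi_pi_ne_zero hπ))

lemma bi_hasVal_exists {π : R} (hπ : Irreducible π) {x : K} (hx : x ≠ 0) :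
    ∃ m : ℤ, bi_HasVal π x m := by
  obtain ⟨r, s, hs, hrs⟩ := IsFractionRing.div_surjective (A := R) x
  have hπ0 : (algebraMap R K π) ≠ 0 := bi_pi_ne_zero hπ
  have hs0 : s ≠ 0 := nonZeroDivisors.ne_zero hs
  have hsK : algebraMap R K s ≠ 0 := bi_map_ne_zero hs0
  have hr0 : r ≠ 0 := by
    intro h0; subst h0; simp at hrs; exact hx hrs.symm
  obtain ⟨k1, u1, hu1⟩ := IsDiscreteValuationRing.eq_unit_mul_pow_irreducible hr0 hπ
  obtain ⟨k2, u2, hu2⟩ := IsDiscreteValuationRing.eq_unit_mul_pow_irreducible hs0 hπ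
  refine ⟨(k1 : ℤ) - k2, u1 * u2⁻¹, ?_⟩
  have hu2K : algebraMap R K (u2 : R) ≠ 0 := bi_unit_ne_zero u2
  have hu2K' : algebraMap R K ((u2⁻¹ : Rˣ) : R) ≠ 0 := bi_unit_ne_zero _
  have hui : algebraMap R K ((u2⁻¹ : Rˣ) : R) * algebraMap R K (u2 : R) = 1 := by
    rw [← _root_.map_mul, ← Units.val_mul, inv_mul_cancel, Units.val_one, _root_.map_one]
  rw [← hrs, hu1, hu2]
  rw [Units.val_mul, _root_.map_mul, _root_.map_mul, _root_.map_mul, map_pow, map_pow, zpow_sub₀ hπ0,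
    zpow_natCast, zpow_natCast,
    show (algebraMap R K ((u2⁻¹ : Rˣ) : R)) = (algebraMap R K (u2 : R))⁻¹ from
      eq_inv_of_mul_eq_one_left hui]
  field_simp

lemma bi_alg_unit_inv (u : Rˣ) :
    algebraMap R K ((u⁻¹ : Rˣ) : R) = (algebraMap R K (u : R))⁻¹ := by
  refine eq_inv_of_mul_eq_one_left ?_
  rw [← _root_.map_mul, ← Units.val_mul, inv_mul_cancel, Units.val_one, _root_.map_one]

lemma bi_hasVal_unique {π : R} (hπ : Irreducible π) {x : K} {m m' : ℤ}
    (h : bi_HasVal π x m) (h' : bi_HasVal π x m') : m = m' := by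
  obtain ⟨u, hu⟩ := h
  obtain ⟨u', hu'⟩ := h'
  set P := algebraMap R K π with hP
  have hP0 : P ≠ 0 := bi_pi_ne_zero hπ
  have key : ∀ (a b : ℤ) (v v' : Rˣ), algebraMap R K (v : R) * P ^ a
      = algebraMap R K (v' : R) * P ^ b → 0 ≤ a - b := by
    intro a b v v' hvv
    refine bi_pow_nonneg (K := K) hπ _ ((v' : R) * ((v⁻¹ : Rˣ) : R)) ?_
    rw [_root_.map_mul, bi_alg_unit_inv (K := K)]
    rw [zpow_sub₀ hP0, div_eq_iff (zpow_ne_zero _ hP0)]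
    have hv0 : algebraMap R K (v : R) ≠ 0 := bi_unit_ne_zero v
    field_simp
    linear_combination hvv
  have h1 := key m' m u' u (hu'.symm.trans hu)
  have h2 := key m m' u u' (hu.symm.trans hu')
  omega

lemma bi_div_int {π : R} (hπ : Irreducible π) {x y : K} {mx my : ℤ}
    (hx : bi_HasVal π x mx) (hy : bi_HasVal π y my) (hle : my ≤ mx) :
    ∃ r : R, x / y = algebraMap R K r ∧ (my < mx → r ∈ IsLocalRing.maximalIdeal R) := by
  obtain ⟨u, hu⟩ := hx
  obtain ⟨v, hv⟩ := hy
  set P := algebraMap R K π with hP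
  have hP0 : P ≠ 0 := bi_pi_ne_zero hπ
  refine ⟨(u : R) * ((v⁻¹ : Rˣ) : R) * π ^ (mx - my).toNat, ?_, ?_⟩
  · rw [hu, hv, _root_.map_mul, _root_.map_mul, bi_alg_unit_inv, map_pow,
      div_eq_iff (by exact mul_ne_zero (bi_unit_ne_zero v) (zpow_ne_zero _ hP0))]
    have hv0 : algebraMap R K (v : R) ≠ 0 := bi_unit_ne_zero v
    have hpow : (P : K) ^ ((mx - my).toNat) * P ^ my = P ^ mx := by
      rw [← zpow_natCast, ← zpow_add₀ hP0, show ((mx - my).toNat : ℤ) + my = mx by omega]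
    field_simp
    rw [← hP]
    linear_combination (-1 : K) * hpow
  · intro hlt
    have h1 : (1:ℕ) ≤ (mx - my).toNat := by omega
    have hπm : π ∈ IsLocalRing.maximalIdeal R := by
      rw [IsLocalRing.mem_maximalIdeal]
      exact hπ.not_isUnit
    have : π ^ (mx - my).toNat ∈ IsLocalRing.maximalIdeal R := by
      rw [show (mx - my).toNat = ((mx - my).toNat - 1) + 1 by omega, pow_succ]
      exact Ideal.mul_mem_left _ _ hπm
    exact Ideal.mul_mem_left _ _ this

namespace BITest

local notation "I₀" => IwahoriSet R K

lemma coe_mul (g h : GL (Fin n) K) :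
    ((g * h : GL (Fin n) K) : Matrix (Fin n) (Fin n) K) = (g : Matrix (Fin n) (Fin n) K) * h :=
  rfl

lemma coe_one : ((1 : GL (Fin n) K) : Matrix (Fin n) (Fin n) K) = 1 := rfl

lemma coe_mul_inv (g : GL (Fin n) K) :
    (g : Matrix (Fin n) (Fin n) K) * ((g⁻¹ : GL (Fin n) K) : Matrix (Fin n) (Fin n) K) = 1 := by
  rw [← coe_mul, mul_inv_cancel, coe_one]

lemma one_mem : (1 : GL (Fin n) K) ∈ I₀ n := by
  refine ⟨?_, ?_, ?_⟩
  · intro i j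
    refine ⟨if i = j then 1 else 0, ?_⟩
    by_cases h : i = j <;> simp [coe_one, Matrix.one_apply, h]
  · intro i j
    refine ⟨if i = j then 1 else 0, ?_⟩
    rw [inv_one]
    by_cases h : i = j <;> simp [coe_one, Matrix.one_apply, h]
  · intro i j hij
    refine ⟨0, Ideal.zero_mem _, ?_⟩
    have : i ≠ j := by intro h; subst h; omega
    simp [coe_one, Matrix.one_apply, this, Ne.symm this]

lemma mul_mem {g h : GL (Fin n) K} (hg : g ∈ I₀ n) (hh : h ∈ I₀ n) : g * h ∈ I₀ n := by
  obtain ⟨hg1, hg2, hg3⟩ := hg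
  obtain ⟨hh1, hh2, hh3⟩ := hh
  refine ⟨?_, ?_, ?_⟩
  · intro i j
    have : ∀ k, ∃ r : R, (g : Matrix (Fin n) (Fin n) K) i k *
        (h : Matrix (Fin n) (Fin n) K) k j = algebraMap R K r := by
      intro k
      obtain ⟨r, hr⟩ := hg1 i k
      obtain ⟨s, hs⟩ := hh1 k j
      exact ⟨r * s, by rw [hr, hs, _root_.map_mul]⟩
    choose F hF using this
    refine ⟨∑ k, F k, ?_⟩
    rw [coe_mul, Matrix.mul_apply, map_sum]
    exact Finset.sum_congr rfl fun k _ => hF k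
  · intro i j
    rw [_root_.mul_inv_rev]
    have : ∀ k, ∃ r : R, ((h⁻¹ : GL (Fin n) K) : Matrix (Fin n) (Fin n) K) i k *
        ((g⁻¹ : GL (Fin n) K) : Matrix (Fin n) (Fin n) K) k j = algebraMap R K r := by
      intro k
      obtain ⟨r, hr⟩ := hh2 i k
      obtain ⟨s, hs⟩ := hg2 k j
      exact ⟨r * s, by rw [hr, hs, _root_.map_mul]⟩
    choose F hF using this
    refine ⟨∑ k, F k, ?_⟩
    rw [coe_mul, Matrix.mul_apply, map_sum]
    exact Finset.sum_congr rfl fun k _ => hF k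
  · intro i j hij
    have : ∀ k, ∃ r ∈ IsLocalRing.maximalIdeal R, (g : Matrix (Fin n) (Fin n) K) i k *
        (h : Matrix (Fin n) (Fin n) K) k j = algebraMap R K r := by
      intro k
      by_cases hk : (k : ℕ) < (i : ℕ)
      · obtain ⟨r, hrm, hr⟩ := hg3 i k hk
        obtain ⟨s, hs⟩ := hh1 k j
        exact ⟨r * s, Ideal.mul_mem_right _ _ hrm, by rw [hr, hs, _root_.map_mul]⟩
      · obtain ⟨r, hr⟩ := hg1 i k
        obtain ⟨s, hsm, hs⟩ := hh3 k j (by omega)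
        exact ⟨r * s, Ideal.mul_mem_left _ _ hsm, by rw [hr, hs, _root_.map_mul]⟩
    choose F hF1 hF2 using this
    refine ⟨∑ k, F k, Ideal.sum_mem _ fun k _ => hF1 k, ?_⟩
    rw [coe_mul, Matrix.mul_apply, map_sum]
    exact Finset.sum_congr rfl fun k _ => hF2 k

lemma residue_facts {g : GL (Fin n) K} (hg : g ∈ I₀ n) :
    (∀ i j : Fin n, (j : ℕ) < (i : ℕ) → ∃ r ∈ IsLocalRing.maximalIdeal R,
      ((g⁻¹ : GL (Fin n) K) : Matrix (Fin n) (Fin n) K) i j = algebraMap R K r) ∧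
    (∀ i : Fin n, ∃ u : Rˣ, (g : Matrix (Fin n) (Fin n) K) i i = algebraMap R K (u : R)) := by
  obtain ⟨hg1, hg2, hg3⟩ := hg
  choose G hG using hg1
  choose G' hG' using hg2
  set φ := IsLocalRing.residue R with hφ
  set M : Matrix (Fin n) (Fin n) (IsLocalRing.ResidueField R) :=
    (Matrix.of G).map φ with hM
  set M' : Matrix (Fin n) (Fin n) (IsLocalRing.ResidueField R) :=
    (Matrix.of G').map φ with hM'
  have hGG' : (Matrix.of G) * (Matrix.of G') = 1 := by
    ext i j
    apply bi_inj (K := K)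
    have h1 : algebraMap R K (((Matrix.of G) * (Matrix.of G')) i j)
        = ((g : Matrix (Fin n) (Fin n) K) * ((g⁻¹ : GL (Fin n) K) : Matrix (Fin n) (Fin n) K)) i j := by
      rw [Matrix.mul_apply, Matrix.mul_apply, map_sum]
      refine Finset.sum_congr rfl fun k _ => ?_
      rw [_root_.map_mul, Matrix.of_apply, Matrix.of_apply, ← hG, ← hG']
    rw [h1, coe_mul_inv]
    by_cases h : i = j <;> simp [Matrix.one_apply, h]
  have hMM' : M * M' = 1 := by
    rw [hM, hM', ← Matrix.map_mul, hGG', Matrix.map_one φ (map_zero φ) (_root_.map_one φ)]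
  have htri : M.BlockTriangular (id : Fin n → Fin n) := by
    intro i j hij
    obtain ⟨r, hrm, hr⟩ := hg3 i j (by exact hij)
    have : G i j = r := bi_inj (K := K) (by rw [← hG, hr])
    simp only [hM, Matrix.map_apply, Matrix.of_apply, this]
    exact (IsLocalRing.residue_eq_zero_iff r).mpr hrm
  haveI : Invertible M := invertibleOfRightInverse _ _ hMM'
  have hMinv : M⁻¹ = M' := Matrix.inv_eq_right_inv hMM'
  have htri' : M'.BlockTriangular (id : Fin n → Fin n) := by
    rw [← hMinv]
    exact Matrix.blockTriangular_inv_of_blockTriangular htri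
  constructor
  · intro i j hij
    refine ⟨G' i j, ?_, (hG' i j)⟩
    have := htri' (i := i) (j := j) (by exact hij)
    have h0 : φ (G' i j) = 0 := by simpa [hM'] using this
    rw [hφ] at h0
    exact (IsLocalRing.residue_eq_zero_iff _).mp h0
  · intro i
    have hdiag : M i i * M' i i = 1 := by
      have h1 : (M * M') i i = 1 := by rw [hMM']; exact Matrix.one_apply_eq i
      rw [Matrix.mul_apply] at h1
      have h2 : ∑ k, M i k * M' k i = M i i * M' i i := by
        refine Finset.sum_eq_single i (fun k _ hk => ?_) (fun h => absurd (Finset.mem_univ i) h)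
        rcases lt_or_gt_of_ne hk with hlt | hlt
        · rw [htri (show id k < id i from hlt), zero_mul]
        · rw [htri' (show id i < id k from hlt), mul_zero]
      rw [← h2]
      exact h1
    have : IsUnit (G i i) := by
      by_contra hnu
      have : G i i ∈ IsLocalRing.maximalIdeal R := hnu
      have h0 : M i i = 0 := by
        simp only [hM, Matrix.map_apply, Matrix.of_apply]
        exact (IsLocalRing.residue_eq_zero_iff _).mpr this
      rw [h0, zero_mul] at hdiag
      exact zero_ne_one hdiag
    exact ⟨this.unit, by rw [hG i i, this.unit_spec]⟩

lemma inv_mem {g : GL (Fin n) K} (hg : g ∈ I₀ n) : g⁻¹ ∈ I₀ n := by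
  obtain ⟨hg1, hg2, hg3⟩ := hg
  refine ⟨hg2, ?_, (residue_facts ⟨hg1, hg2, hg3⟩).1⟩
  intro i j
  rw [inv_inv]
  exact hg1 i j

lemma diag_unit {g : GL (Fin n) K} (hg : g ∈ I₀ n) (i : Fin n) :
    ∃ u : Rˣ, (g : Matrix (Fin n) (Fin n) K) i i = algebraMap R K (u : R) :=
  (residue_facts hg).2 i

/-! ### Elementary matrices -/

def colN (c : Fin n → K) (i₀ : Fin n) : Matrix (Fin n) (Fin n) K :=
  Matrix.of fun i j => if j = i₀ then c i else 0

lemma colN_sq (c : Fin n → K) (i₀ : Fin n) (h : c i₀ = 0) :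
    colN c i₀ * colN c i₀ = 0 := by
  ext i j
  rw [Matrix.mul_apply]
  simp only [colN, Matrix.of_apply, Matrix.zero_apply]
  rw [Finset.sum_eq_single i₀ (fun k _ hk => by simp [hk]) (fun h => absurd (Finset.mem_univ i₀) h)]
  simp [h]

lemma colN_mul_inv (c : Fin n → K) (i₀ : Fin n) (h : c i₀ = 0) :
    (1 + colN c i₀) * (1 - colN c i₀) = 1 := by
  rw [add_mul, one_mul, mul_sub, mul_one, colN_sq c i₀ h, sub_zero]
  abel

lemma colN_inv_mul (c : Fin n → K) (i₀ : Fin n) (h : c i₀ = 0) :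
    (1 - colN c i₀) * (1 + colN c i₀) = 1 := by
  rw [sub_mul, one_mul, mul_add, mul_one, colN_sq c i₀ h, add_zero]
  abel

def colGL (c : Fin n → K) (i₀ : Fin n) (h : c i₀ = 0) : GL (Fin n) K :=
  ⟨1 + colN c i₀, 1 - colN c i₀, colN_mul_inv c i₀ h, colN_inv_mul c i₀ h⟩

lemma colGL_coe (c : Fin n → K) (i₀ : Fin n) (h : c i₀ = 0) :
    ((colGL c i₀ h : GL (Fin n) K) : Matrix (Fin n) (Fin n) K) = 1 + colN c i₀ := rfl

lemma colGL_inv_coe (c : Fin n → K) (i₀ : Fin n) (h : c i₀ = 0) :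
    (((colGL c i₀ h)⁻¹ : GL (Fin n) K) : Matrix (Fin n) (Fin n) K) = 1 - colN c i₀ := rfl

lemma colN_mul_apply (c : Fin n → K) (i₀ : Fin n) (M : Matrix (Fin n) (Fin n) K) (i j : Fin n) :
    ((1 + colN c i₀) * M) i j = M i j + c i * M i₀ j := by
  rw [add_mul, one_mul, Matrix.add_apply, Matrix.mul_apply]
  congr 1
  simp only [colN, Matrix.of_apply, ite_mul, zero_mul]
  rw [Finset.sum_ite_eq' Finset.univ i₀ (fun k => c i * M k j)]
  simp

lemma colGL_mem (c : Fin n → K) (i₀ : Fin n) (h : c i₀ = 0)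
    (hint : ∀ i, ∃ r : R, c i = algebraMap R K r)
    (hbel : ∀ i : Fin n, (i₀ : ℕ) < (i : ℕ) → ∃ r ∈ IsLocalRing.maximalIdeal R,
      c i = algebraMap R K r) :
    colGL c i₀ h ∈ I₀ n := by
  refine ⟨?_, ?_, ?_⟩
  · intro i j
    rw [colGL_coe]
    simp only [Matrix.add_apply, Matrix.one_apply, colN, Matrix.of_apply]
    obtain ⟨r, hr⟩ := hint i
    refine ⟨(if i = j then 1 else 0) + (if j = i₀ then r else 0), ?_⟩
    rw [map_add]
    congr 1
    · split <;> simp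
    · split <;> simp [hr]
  · intro i j
    rw [colGL_inv_coe]
    simp only [Matrix.sub_apply, Matrix.one_apply, colN, Matrix.of_apply]
    obtain ⟨r, hr⟩ := hint i
    refine ⟨(if i = j then 1 else 0) - (if j = i₀ then r else 0), ?_⟩
    rw [map_sub]
    congr 1
    · split <;> simp
    · split <;> simp [hr]
  · intro i j hij
    rw [colGL_coe]
    simp only [Matrix.add_apply, Matrix.one_apply, colN, Matrix.of_apply]
    have hne : i ≠ j := fun h' => by subst h'; omega
    by_cases hj : j = i₀
    · subst hj
      obtain ⟨r, hrm, hr⟩ := hbel i hij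
      exact ⟨r, hrm, by simp [hne, hr]⟩
    · exact ⟨0, Ideal.zero_mem _, by simp [hne, hj]⟩

def rowN (d : Fin n → K) (q : Fin n) : Matrix (Fin n) (Fin n) K :=
  Matrix.of fun i j => if i = q then d j else 0

lemma rowN_sq (d : Fin n → K) (q : Fin n) (h : d q = 0) :
    rowN d q * rowN d q = 0 := by
  ext i j
  rw [Matrix.mul_apply]
  simp only [rowN, Matrix.of_apply, Matrix.zero_apply]
  rw [Finset.sum_eq_single q (fun k _ hk => by simp [hk]) (fun h => absurd (Finset.mem_univ q) h)]
  simp [h]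

lemma rowN_mul_inv (d : Fin n → K) (q : Fin n) (h : d q = 0) :
    (1 + rowN d q) * (1 - rowN d q) = 1 := by
  rw [add_mul, one_mul, mul_sub, mul_one, rowN_sq d q h, sub_zero]
  abel

lemma rowN_inv_mul (d : Fin n → K) (q : Fin n) (h : d q = 0) :
    (1 - rowN d q) * (1 + rowN d q) = 1 := by
  rw [sub_mul, one_mul, mul_add, mul_one, rowN_sq d q h, add_zero]
  abel

def rowGL (d : Fin n → K) (q : Fin n) (h : d q = 0) : GL (Fin n) K :=
  ⟨1 + rowN d q, 1 - rowN d q, rowN_mul_inv d q h, rowN_inv_mul d q h⟩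

lemma rowGL_coe (d : Fin n → K) (q : Fin n) (h : d q = 0) :
    ((rowGL d q h : GL (Fin n) K) : Matrix (Fin n) (Fin n) K) = 1 + rowN d q := rfl

lemma rowGL_inv_coe (d : Fin n → K) (q : Fin n) (h : d q = 0) :
    (((rowGL d q h)⁻¹ : GL (Fin n) K) : Matrix (Fin n) (Fin n) K) = 1 - rowN d q := rfl

lemma mul_rowN_apply (d : Fin n → K) (q : Fin n) (M : Matrix (Fin n) (Fin n) K) (i j : Fin n) :
    (M * (1 + rowN d q)) i j = M i j + M i q * d j := by
  rw [mul_add, mul_one, Matrix.add_apply, Matrix.mul_apply]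
  congr 1
  simp only [rowN, Matrix.of_apply, mul_ite, mul_zero]
  rw [Finset.sum_ite_eq' Finset.univ q (fun k => M i k * d j)]
  simp

lemma rowGL_mem (d : Fin n → K) (q : Fin n) (h : d q = 0)
    (hint : ∀ j, ∃ r : R, d j = algebraMap R K r)
    (hbel : ∀ j : Fin n, (j : ℕ) < (q : ℕ) → ∃ r ∈ IsLocalRing.maximalIdeal R,
      d j = algebraMap R K r) :
    rowGL d q h ∈ I₀ n := by
  refine ⟨?_, ?_, ?_⟩
  · intro i j
    rw [rowGL_coe]
    simp only [Matrix.add_apply, Matrix.one_apply, rowN, Matrix.of_apply]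
    obtain ⟨r, hr⟩ := hint j
    refine ⟨(if i = j then 1 else 0) + (if i = q then r else 0), ?_⟩
    rw [map_add]
    congr 1
    · split <;> simp
    · split <;> simp [hr]
  · intro i j
    rw [rowGL_inv_coe]
    simp only [Matrix.sub_apply, Matrix.one_apply, rowN, Matrix.of_apply]
    obtain ⟨r, hr⟩ := hint j
    refine ⟨(if i = j then 1 else 0) - (if i = q then r else 0), ?_⟩
    rw [map_sub]
    congr 1
    · split <;> simp
    · split <;> simp [hr]
  · intro i j hij
    rw [rowGL_coe]
    simp only [Matrix.add_apply, Matrix.one_apply, rowN, Matrix.of_apply]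
    have hne : i ≠ j := fun h' => by subst h'; omega
    by_cases hi : i = q
    · subst hi
      obtain ⟨r, hrm, hr⟩ := hbel j hij
      exact ⟨r, hrm, by simp [hne, hr]⟩
    · exact ⟨0, Ideal.zero_mem _, by simp [hne, hi]⟩

def diagGL (u : Rˣ) (i₀ : Fin n) : GL (Fin n) K :=
  ⟨Matrix.diagonal (fun i => if i = i₀ then algebraMap R K ((u : R)) else 1),
   Matrix.diagonal (fun i => if i = i₀ then algebraMap R K (((u⁻¹ : Rˣ) : R)) else 1),
   by
    rw [Matrix.diagonal_mul_diagonal]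
    have hfg : (fun i : Fin n => (if i = i₀ then algebraMap R K ((u : R)) else 1) *
        (if i = i₀ then algebraMap R K (((u⁻¹ : Rˣ) : R)) else 1)) = fun _ => (1 : K) := by
      funext i
      split
      · rw [← _root_.map_mul, ← Units.val_mul, mul_inv_cancel, Units.val_one, _root_.map_one]
      · rw [one_mul]
    rw [hfg, Matrix.diagonal_one],
   by
    rw [Matrix.diagonal_mul_diagonal]
    have hfg : (fun i : Fin n => (if i = i₀ then algebraMap R K (((u⁻¹ : Rˣ) : R)) else 1) *
        (if i = i₀ then algebraMap R K ((u : R)) else 1)) = fun _ => (1 : K) := by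
      funext i
      split
      · rw [← _root_.map_mul, ← Units.val_mul, inv_mul_cancel, Units.val_one, _root_.map_one]
      · rw [one_mul]
    rw [hfg, Matrix.diagonal_one]⟩

lemma diagGL_coe (u : Rˣ) (i₀ : Fin n) :
    ((diagGL u i₀ : GL (Fin n) K) : Matrix (Fin n) (Fin n) K)
      = Matrix.diagonal (fun i => if i = i₀ then algebraMap R K ((u : R)) else 1) := rfl

lemma diagGL_mem (u : Rˣ) (i₀ : Fin n) : (diagGL u i₀ : GL (Fin n) K) ∈ I₀ n := by
  have hgen : ∀ (v : Rˣ), ∀ i j : Fin n,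
      ∃ r : R, Matrix.diagonal (fun i => if i = i₀ then algebraMap R K ((v : R)) else 1) i j
        = algebraMap R K r := by
    intro v i j
    refine ⟨if i = j then (if i = i₀ then (v : R) else 1) else 0, ?_⟩
    rw [Matrix.diagonal_apply]
    split
    · subst ‹i = j›; split <;> simp
    · simp
  refine ⟨fun i j => by rw [diagGL_coe]; exact hgen u i j, fun i j => hgen u⁻¹ i j, ?_⟩
  · intro i j hij
    have hne : i ≠ j := fun h' => by subst h'; omega
    refine ⟨0, Ideal.zero_mem _, ?_⟩
    rw [diagGL_coe, Matrix.diagonal_apply_ne _ hne, map_zero]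

/-! ### The invariant for the elimination -/

def Inv (π : R) (S : Finset (Fin n)) (ρ : Fin n → Fin n) (h : GL (Fin n) K) : Prop :=
  (∀ q, q ∉ S → ∀ q', q' ∉ S → ρ q = ρ q' → q = q') ∧
  (∀ q, q ∉ S → ∃ m : ℤ, (h : Matrix (Fin n) (Fin n) K) (ρ q) q = (algebraMap R K π) ^ m) ∧
  (∀ q, q ∉ S → ∀ i, i ≠ ρ q → (h : Matrix (Fin n) (Fin n) K) i q = 0) ∧
  (∀ q, q ∉ S → ∀ c, c ≠ q → (h : Matrix (Fin n) (Fin n) K) (ρ q) c = 0)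

lemma inv_empty_isPiMonomial {π : R} (hπ : Irreducible π) (ρ : Fin n → Fin n)
    (h : GL (Fin n) K) (hInv : Inv π ∅ ρ h) : IsPiMonomial R K n π (h : Matrix (Fin n) (Fin n) K) := by
  obtain ⟨hinj, hpow, hcol, hrow⟩ := hInv
  have hbij : Function.Bijective ρ :=
    Finite.injective_iff_bijective.mp
      (fun a b hab => hinj a (Finset.notMem_empty a) b (Finset.notMem_empty b) hab)
  have hne : ∀ q : Fin n, (h : Matrix (Fin n) (Fin n) K) (ρ q) q ≠ 0 := by
    intro q
    obtain ⟨m, hm⟩ := hpow q (Finset.notMem_empty q)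
    rw [hm]
    exact zpow_ne_zero _ (bi_pi_ne_zero hπ)
  refine ⟨?_, ?_, ?_⟩
  · intro i
    obtain ⟨q, hq⟩ := hbij.2 i
    subst hq
    refine ⟨q, hne q, ?_⟩
    intro j hj
    by_contra hjq
    exact hj (hrow q (Finset.notMem_empty q) j hjq)
  · intro j
    refine ⟨ρ j, hne j, ?_⟩
    intro i hi
    by_contra hiρ
    exact hi (hcol j (Finset.notMem_empty j) i hiρ)
  · intro i j hij
    have : i = ρ j := by
      by_contra hiρ
      exact hij (hcol j (Finset.notMem_empty j) i hiρ)
    subst this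
    exact hpow j (Finset.notMem_empty j)

lemma step {π : R} (hπ : Irreducible π) (S : Finset (Fin n)) (ρ : Fin n → Fin n)
    (h : GL (Fin n) K) (hInv : Inv π S ρ h) (hS : S.Nonempty) :
    ∃ (S' : Finset (Fin n)) (ρ' : Fin n → Fin n) (h' : GL (Fin n) K) (a b : GL (Fin n) K),
      a ∈ I₀ n ∧ b ∈ I₀ n ∧ S'.card < S.card ∧ Inv π S' ρ' h' ∧ h = a * h' * b := by
  classical
  obtain ⟨hinj, hpow, hcol, hrow⟩ := hInv
  set H : Matrix (Fin n) (Fin n) K := (h : Matrix (Fin n) (Fin n) K) with hH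
  set Fr : Fin n → Prop := fun i => ∀ q, q ∉ S → ρ q ≠ i with hFr
  set C : Finset (Fin n × Fin n) :=
    Finset.univ.filter (fun p => p.2 ∈ S ∧ H p.1 p.2 ≠ 0 ∧ Fr p.1) with hC
  have hmkC : ∀ i cc, cc ∈ S → H i cc ≠ 0 → Fr i → (i, cc) ∈ C := by
    intro i cc h1 h2 h3
    rw [hC]
    exact Finset.mem_filter.mpr ⟨Finset.mem_univ _, h1, h2, h3⟩
  have hmemC : ∀ p : Fin n × Fin n, p ∈ C → p.2 ∈ S ∧ H p.1 p.2 ≠ 0 ∧ Fr p.1 := by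
    intro p hp
    rw [hC] at hp
    exact (Finset.mem_filter.mp hp).2
  have hvex : ∀ p : Fin n × Fin n, ∃ m : ℤ, H p.1 p.2 ≠ 0 → bi_HasVal π (H p.1 p.2) m := by
    intro p
    by_cases hz : H p.1 p.2 = 0
    · exact ⟨0, fun hc => absurd hz hc⟩
    · obtain ⟨m, hm⟩ := bi_hasVal_exists hπ hz
      exact ⟨m, fun _ => hm⟩
  choose vfun hvfun using hvex
  have hCne : C.Nonempty := by
    obtain ⟨q₀, hq₀⟩ := hS
    by_contra hCe
    rw [Finset.not_nonempty_iff_eq_empty] at hCe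
    have hcol0 : ∀ i, H i q₀ = 0 := by
      intro i
      by_cases hf : Fr i
      · by_contra hne
        have hmem : (i, q₀) ∈ C := hmkC i q₀ hq₀ hne hf
        rw [hCe] at hmem
        exact Finset.notMem_empty _ hmem
      · simp only [hFr] at hf
        push_neg at hf
        obtain ⟨q', hq', hρ⟩ := hf
        rw [← hρ]
        exact hrow q' hq' q₀ (fun hcq => hq' (hcq ▸ hq₀))
    have hdet : H.det = 0 := Matrix.det_eq_zero_of_column_eq_zero q₀ hcol0
    have hun : IsUnit H.det := (Matrix.isUnit_iff_isUnit_det H).mp ⟨h, rfl⟩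
    rw [hdet] at hun
    exact hun.ne_zero rfl
  obtain ⟨p₁, hp₁C, hp₁min⟩ := Finset.exists_min_image C vfun hCne
  set m₀ : ℤ := vfun p₁ with hm₀
  set C' : Finset (Fin n × Fin n) := C.filter (fun p => vfun p = m₀) with hC'
  have hC'ne : C'.Nonempty := ⟨p₁, by rw [hC']; exact Finset.mem_filter.mpr ⟨hp₁C, rfl⟩⟩
  obtain ⟨p₂, hp₂, hp₂max⟩ := Finset.exists_max_image C' (fun p => (p.1 : ℕ)) hC'ne
  set i₀ : Fin n := p₂.1 with hi₀
  set C'' : Finset (Fin n × Fin n) := C'.filter (fun p => p.1 = i₀) with hC''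
  have hC''ne : C''.Nonempty := ⟨p₂, by rw [hC'']; exact Finset.mem_filter.mpr ⟨hp₂, rfl⟩⟩
  obtain ⟨p₃, hp₃, hp₃min⟩ := Finset.exists_min_image C'' (fun p => (p.2 : ℕ)) hC''ne
  set q : Fin n := p₃.2 with hqdef
  have hp₃1 : p₃.1 = i₀ := by
    have hx := hp₃; rw [hC''] at hx; exact (Finset.mem_filter.mp hx).2
  have hp₃C' : p₃ ∈ C' := by
    have hx := hp₃; rw [hC''] at hx; exact (Finset.mem_filter.mp hx).1
  have hp₃C : p₃ ∈ C := by
    have hx := hp₃C'; rw [hC'] at hx; exact (Finset.mem_filter.mp hx).1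
  have hp₃v : vfun p₃ = m₀ := by
    have hx := hp₃C'; rw [hC'] at hx; exact (Finset.mem_filter.mp hx).2
  have hqS : q ∈ S := (hmemC p₃ hp₃C).1
  have hpiv0 : H i₀ q ≠ 0 := by
    have := (hmemC p₃ hp₃C).2.1
    rwa [hp₃1] at this
  have hfree : Fr i₀ := by
    have := (hmemC p₃ hp₃C).2.2
    rwa [hp₃1] at this
  have hpivV : bi_HasVal π (H i₀ q) m₀ := by
    have h1 := hvfun p₃ (by rw [hp₃1]; exact hpiv0)
    rwa [hp₃1, hp₃v] at h1
  have hminAll : ∀ i cc, (i, cc) ∈ C → m₀ ≤ vfun (i, cc) := fun i cc hp => hp₁min (i, cc) hp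
  have hrowmax : ∀ i cc, (i, cc) ∈ C → vfun (i, cc) = m₀ → (i : ℕ) ≤ (i₀ : ℕ) := by
    intro i cc hp hv
    exact hp₂max (i, cc) (by rw [hC']; exact Finset.mem_filter.mpr ⟨hp, hv⟩)
  have hcolmin : ∀ cc, (i₀, cc) ∈ C → vfun (i₀, cc) = m₀ → (q : ℕ) ≤ (cc : ℕ) := by
    intro cc hp hv
    exact hp₃min (i₀, cc)
      (by rw [hC'']; exact Finset.mem_filter.mpr ⟨by rw [hC']; exact Finset.mem_filter.mpr ⟨hp, hv⟩, rfl⟩)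
  -- basic vanishing facts
  have hHfree0 : ∀ j, j ∉ S → H i₀ j = 0 := fun j hj =>
    hcol j hj i₀ (fun e => hfree j hj e.symm)
  have hHrow0 : ∀ q', q' ∉ S → H (ρ q') q = 0 := fun q' hq' =>
    hrow q' hq' q (fun e => hq' (e ▸ hqS))
  have hfreeOf : ∀ i, H i q ≠ 0 → Fr i := by
    intro i hne q' hq' hρ
    exact hne (hρ ▸ hHrow0 q' hq')
  -- the column and row coefficients
  set c : Fin n → K := fun i => if i = i₀ then 0 else -(H i q / H i₀ q) with hcdef
  have hc0 : c i₀ = 0 := by rw [hcdef]; simp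
  have hcint : ∀ i, ∃ r : R, c i = algebraMap R K r ∧
      ((i₀ : ℕ) < (i : ℕ) → r ∈ IsLocalRing.maximalIdeal R) := by
    intro i
    by_cases hii : i = i₀
    · refine ⟨0, by rw [hcdef]; simp [hii], fun hlt => ?_⟩
      subst hii; omega
    · by_cases hz : H i q = 0
      · exact ⟨0, by rw [hcdef]; simp [hii, hz], fun _ => Ideal.zero_mem _⟩
      · have hiC : (i, q) ∈ C := hmkC i q hqS hz (hfreeOf i hz)
        have hvi := hvfun (i, q) hz
        have hge : m₀ ≤ vfun (i, q) := hminAll i q hiC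
        obtain ⟨r, hr1, hr2⟩ := bi_div_int hπ hvi hpivV hge
        refine ⟨-r, ?_, ?_⟩
        · rw [hcdef]
          simp only [if_neg hii]
          rw [hr1, map_neg]
        · intro hlt
          refine neg_mem (hr2 ?_)
          rcases lt_or_eq_of_le hge with h' | h'
          · exact h'
          · exact absurd (hrowmax i q hiC h'.symm) (by omega)
  set d : Fin n → K := fun j => if j = q then 0 else -(H i₀ j / H i₀ q) with hddef
  have hd0 : d q = 0 := by rw [hddef]; simp
  have hdint : ∀ j, ∃ r : R, d j = algebraMap R K r ∧
      ((j : ℕ) < (q : ℕ) → r ∈ IsLocalRing.maximalIdeal R) := by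
    intro j
    by_cases hjq : j = q
    · refine ⟨0, by rw [hddef]; simp [hjq], fun hlt => ?_⟩
      subst hjq; omega
    · by_cases hz : H i₀ j = 0
      · exact ⟨0, by rw [hddef]; simp [hjq, hz], fun _ => Ideal.zero_mem _⟩
      · have hjS : j ∈ S := by
          by_contra hjS
          exact hz (hHfree0 j hjS)
        have hjC : (i₀, j) ∈ C := hmkC i₀ j hjS hz hfree
        have hvj := hvfun (i₀, j) hz
        have hge : m₀ ≤ vfun (i₀, j) := hminAll i₀ j hjC
        obtain ⟨r, hr1, hr2⟩ := bi_div_int hπ hvj hpivV hge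
        refine ⟨-r, ?_, ?_⟩
        · rw [hddef]
          simp only [if_neg hjq]
          rw [hr1, map_neg]
        · intro hlt
          refine neg_mem (hr2 ?_)
          rcases lt_or_eq_of_le hge with h' | h'
          · exact h'
          · exact absurd (hcolmin j hjC h'.symm) (by omega)
  obtain ⟨u, hu⟩ := hpivV
  -- the elementary factors
  set Lgl : GL (Fin n) K := colGL c i₀ hc0 with hLgl
  set Ugl : GL (Fin n) K := rowGL d q hd0 with hUgl
  set Dgl : GL (Fin n) K := diagGL u⁻¹ i₀ with hDgl
  have hLmem : Lgl ∈ I₀ n :=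
    colGL_mem c i₀ hc0 (fun i => ⟨(hcint i).choose, (hcint i).choose_spec.1⟩)
      (fun i hlt => ⟨(hcint i).choose, (hcint i).choose_spec.2 hlt, (hcint i).choose_spec.1⟩)
  have hUmem : Ugl ∈ I₀ n :=
    rowGL_mem d q hd0 (fun j => ⟨(hdint j).choose, (hdint j).choose_spec.1⟩)
      (fun j hlt => ⟨(hdint j).choose, (hdint j).choose_spec.2 hlt, (hdint j).choose_spec.1⟩)
  have hDmem : Dgl ∈ I₀ n := diagGL_mem u⁻¹ i₀
  set h' : GL (Fin n) K := Dgl * Lgl * h * Ugl with hh'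
  -- entry formula
  have E : ∀ i j, (h' : Matrix (Fin n) (Fin n) K) i j =
      (if i = i₀ then algebraMap R K (((u⁻¹ : Rˣ) : R)) else 1) *
        ((H i j + c i * H i₀ j) + (H i q + c i * H i₀ q) * d j) := by
    intro i j
    have h1 : (h' : Matrix (Fin n) (Fin n) K) =
        ((Dgl : Matrix (Fin n) (Fin n) K)) *
          ((((Lgl : Matrix (Fin n) (Fin n) K)) * H) * ((Ugl : Matrix (Fin n) (Fin n) K))) := by
      rw [hh', coe_mul, coe_mul, coe_mul, ← hH]
      rw [mul_assoc ((Dgl : Matrix (Fin n) (Fin n) K)), mul_assoc ((Dgl : Matrix (Fin n) (Fin n) K))]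
    rw [h1, hDgl, diagGL_coe, Matrix.diagonal_mul]
    congr 1
    rw [hUgl, rowGL_coe, mul_rowN_apply, hLgl, colGL_coe, colN_mul_apply, colN_mul_apply]
  -- entry computations
  have hAq : ∀ i, i ≠ i₀ → H i q + c i * H i₀ q = 0 := by
    intro i hii
    rw [hcdef]
    simp only [if_neg hii]
    rw [neg_mul, div_mul_cancel₀ _ hpiv0, add_neg_cancel]
  have hEcolq : ∀ i, i ≠ i₀ → (h' : Matrix (Fin n) (Fin n) K) i q = 0 := by
    intro i hii
    rw [E i q, hd0, mul_zero, add_zero, hAq i hii, mul_zero]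
  have hEpiv : (h' : Matrix (Fin n) (Fin n) K) i₀ q = (algebraMap R K π) ^ m₀ := by
    rw [E i₀ q, hd0, mul_zero, add_zero, hc0, zero_mul, add_zero, if_pos rfl, hu,
      ← mul_assoc, ← _root_.map_mul, ← Units.val_mul, inv_mul_cancel, Units.val_one,
      _root_.map_one, one_mul]
  have hErow : ∀ j, j ≠ q → (h' : Matrix (Fin n) (Fin n) K) i₀ j = 0 := by
    intro j hj
    have hDj : H i₀ j + H i₀ q * d j = 0 := by
      rw [hddef]
      simp only [if_neg hj]
      rw [mul_neg, mul_comm, div_mul_cancel₀ _ hpiv0, add_neg_cancel]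
    rw [E i₀ j, hc0, zero_mul, add_zero, zero_mul, add_zero, hDj, mul_zero]
  have hdS0 : ∀ j, j ∉ S → d j = 0 := by
    intro j hj
    have hjq : j ≠ q := fun e => hj (e ▸ hqS)
    rw [hddef]
    simp only [if_neg hjq]
    rw [hHfree0 j hj, zero_div, neg_zero]
  have hEold : ∀ j, j ∉ S → ∀ i, (h' : Matrix (Fin n) (Fin n) K) i j =
      (if i = i₀ then algebraMap R K (((u⁻¹ : Rˣ) : R)) else 1) * H i j := by
    intro j hj i
    rw [E i j, hdS0 j hj, mul_zero, add_zero, hHfree0 j hj, mul_zero, add_zero]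
  have hEold1 : ∀ j, j ∉ S → ∀ i, i ≠ ρ j → (h' : Matrix (Fin n) (Fin n) K) i j = 0 := by
    intro j hj i hiρ
    rw [hEold j hj i, hcol j hj i hiρ, mul_zero]
  have hEold2 : ∀ j, j ∉ S → (h' : Matrix (Fin n) (Fin n) K) (ρ j) j = H (ρ j) j := by
    intro j hj
    rw [hEold j hj (ρ j), if_neg (fun e => hfree j hj e), one_mul]
  have hErowOld : ∀ q', q' ∉ S → ∀ cc, (h' : Matrix (Fin n) (Fin n) K) (ρ q') cc = H (ρ q') cc := by
    intro q' hq' cc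
    have hcq' : c (ρ q') = 0 := by
      rw [hcdef]
      have hρne : ρ q' ≠ i₀ := hfree q' hq'
      simp only [if_neg hρne]
      rw [hHrow0 q' hq', zero_div, neg_zero]
    rw [E (ρ q') cc, hcq', zero_mul, add_zero, zero_mul, add_zero, hHrow0 q' hq',
      zero_mul, add_zero, if_neg (hfree q' hq'), one_mul]
  -- assemble the new invariant
  refine ⟨S.erase q, Function.update ρ q i₀, h', (Dgl * Lgl)⁻¹, Ugl⁻¹, ?_, ?_, ?_, ?_, ?_⟩
  · exact inv_mem (mul_mem hDmem hLmem)
  · exact inv_mem hUmem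
  · exact Finset.card_erase_lt_of_mem hqS
  · have hmemS' : ∀ x : Fin n, x ∉ S.erase q → x ≠ q → x ∉ S := by
      intro x hx hxq
      intro hxS
      exact hx (Finset.mem_erase.mpr ⟨hxq, hxS⟩)
    refine ⟨?_, ?_, ?_, ?_⟩
    · intro q1 h1 q2 h2 heq
      by_cases hq1 : q1 = q <;> by_cases hq2 : q2 = q
      · rw [hq1, hq2]
      · exfalso
        rw [hq1, Function.update_self] at heq
        rw [Function.update_of_ne hq2] at heq
        exact hfree q2 (hmemS' q2 h2 hq2) heq.symm
      · exfalso
        rw [hq2, Function.update_self] at heq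
        rw [Function.update_of_ne hq1] at heq
        exact hfree q1 (hmemS' q1 h1 hq1) heq
      · rw [Function.update_of_ne hq1, Function.update_of_ne hq2] at heq
        exact hinj q1 (hmemS' q1 h1 hq1) q2 (hmemS' q2 h2 hq2) heq
    · intro q1 h1
      by_cases hq1 : q1 = q
      · subst hq1
        rw [Function.update_self]
        exact ⟨m₀, hEpiv⟩
      · rw [Function.update_of_ne hq1]
        have hq1S : q1 ∉ S := hmemS' q1 h1 hq1
        rw [hEold2 q1 hq1S]
        exact hpow q1 hq1S
    · intro q1 h1 i hi
      by_cases hq1 : q1 = q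
      · subst hq1
        rw [Function.update_self] at hi
        exact hEcolq i hi
      · rw [Function.update_of_ne hq1] at hi
        exact hEold1 q1 (hmemS' q1 h1 hq1) i hi
    · intro q1 h1 cc hcc
      by_cases hq1 : q1 = q
      · subst hq1
        rw [Function.update_self]
        exact hErow cc hcc
      · rw [Function.update_of_ne hq1]
        have hq1S : q1 ∉ S := hmemS' q1 h1 hq1
        rw [hErowOld q1 hq1S cc]
        exact hrow q1 hq1S cc hcc
  · rw [hh']
    group

lemma main_induction {π : R} (hπ : Irreducible π) :
    ∀ (N : ℕ) (S : Finset (Fin n)) (ρ : Fin n → Fin n) (h : GL (Fin n) K),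
      S.card ≤ N → Inv π S ρ h →
      ∃ w : GL (Fin n) K, IsPiMonomial R K n π (w : Matrix (Fin n) (Fin n) K) ∧
        ∃ a ∈ I₀ n, ∃ b ∈ I₀ n, h = a * w * b := by
  intro N
  induction N with
  | zero =>
    intro S ρ h hcard hInv
    have hSe : S = ∅ := Finset.card_eq_zero.mp (Nat.le_zero.mp hcard)
    subst hSe
    exact ⟨h, inv_empty_isPiMonomial hπ ρ h hInv, 1, one_mem, 1, one_mem, by group⟩
  | succ N ih =>
    intro S ρ h hcard hInv
    rcases S.eq_empty_or_nonempty with hSe | hSne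
    · subst hSe
      exact ⟨h, inv_empty_isPiMonomial hπ ρ h hInv, 1, one_mem, 1, one_mem, by group⟩
    · obtain ⟨S', ρ', h', a, b, ha, hb, hlt, hInv', heq⟩ := step hπ S ρ h hInv hSne
      have hcard' : S'.card ≤ N := by omega
      obtain ⟨w, hw, a', ha', b', hb', heq'⟩ := ih S' ρ' h' hcard' hInv'
      refine ⟨w, hw, a * a', mul_mem ha ha', b' * b, mul_mem hb' hb, ?_⟩
      rw [heq, heq']
      group

lemma exists_decomp {π : R} (hπ : Irreducible π) (g : GL (Fin n) K) :
    ∃ w : GL (Fin n) K, IsPiMonomial R K n π (w : Matrix (Fin n) (Fin n) K) ∧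
      ∃ a ∈ I₀ n, ∃ b ∈ I₀ n, g = a * w * b := by
  refine main_induction hπ (Finset.univ.card) Finset.univ id g le_rfl ?_
  refine ⟨?_, ?_, ?_, ?_⟩ <;>
    · intro q hq
      exact absurd (Finset.mem_univ q) hq

lemma bi_le_of_eq {π : R} (hπ : Irreducible π) (t s : ℤ) (r : R) (u : Rˣ)
    (heq : algebraMap R K r * (algebraMap R K π) ^ t
      = (algebraMap R K π) ^ s * algebraMap R K (u : R)) : t ≤ s := by
  set P := algebraMap R K π with hP
  have hP0 : P ≠ 0 := bi_pi_ne_zero hπ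
  have huu : algebraMap R K (u : R) * algebraMap R K ((u⁻¹ : Rˣ) : R) = 1 := by
    rw [← _root_.map_mul, ← Units.val_mul, mul_inv_cancel, Units.val_one, _root_.map_one]
  have hkey : P ^ (s - t) = algebraMap R K (r * ((u⁻¹ : Rˣ) : R)) := by
    rw [_root_.map_mul, zpow_sub₀ hP0, div_eq_iff (zpow_ne_zero _ hP0)]
    linear_combination (-(algebraMap R K ((u⁻¹ : Rˣ) : R))) * heq - (P ^ s) * huu
  have := bi_pow_nonneg hπ (s - t) _ hkey
  omega

lemma bi_unit_of_eq {π : R} (hπ : Irreducible π) (t : ℤ) (r : R) (u : Rˣ)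
    (heq : algebraMap R K r * (algebraMap R K π) ^ t
      = (algebraMap R K π) ^ t * algebraMap R K (u : R)) : r = (u : R) := by
  have hP0 : (algebraMap R K π) ^ t ≠ 0 := zpow_ne_zero _ (bi_pi_ne_zero hπ)
  apply bi_inj (K := K)
  apply mul_right_cancel₀ hP0
  rw [heq, mul_comm]

lemma uniq_core {π : R} (hπ : Irreducible π) {w w' : GL (Fin n) K}
    (hw : IsPiMonomial R K n π (w : Matrix (Fin n) (Fin n) K))
    (hw' : IsPiMonomial R K n π (w' : Matrix (Fin n) (Fin n) K))
    {a b : GL (Fin n) K} (ha : a ∈ I₀ n) (hb : b ∈ I₀ n)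
    (heq : w' = a * w * b) : w' = w := by
  obtain ⟨hwrow, hwcol, hwpow⟩ := hw
  obtain ⟨hw'row, hw'col, hw'pow⟩ := hw'
  set P := algebraMap R K π with hP
  set W : Matrix (Fin n) (Fin n) K := (w : Matrix (Fin n) (Fin n) K) with hW
  set W' : Matrix (Fin n) (Fin n) K := (w' : Matrix (Fin n) (Fin n) K) with hW'
  -- the permutations and exponents
  choose σ hσ hσu using hwcol
  choose σ' hσ' hσ'u using hw'col
  choose m hm using fun j => hwpow (σ j) j (hσ j)
  choose m' hm' using fun j => hw'pow (σ' j) j (hσ' j)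
  have hWzero : ∀ i j, i ≠ σ j → W i j = 0 := by
    intro i j hij
    by_contra hne
    exact hij (hσu j i hne)
  have hW'zero : ∀ i j, i ≠ σ' j → W' i j = 0 := by
    intro i j hij
    by_contra hne
    exact hij (hσ'u j i hne)
  have hσinj : Function.Injective σ := by
    intro j j' hjj
    obtain ⟨cc, hcc, hccu⟩ := hwrow (σ j)
    rw [hccu j (hσ j), hccu j' (by rw [hjj]; exact hσ j')]
  have hσ'inj : Function.Injective σ' := by
    intro j j' hjj
    obtain ⟨cc, hcc, hccu⟩ := hw'row (σ' j)
    rw [hccu j (hσ' j), hccu j' (by rw [hjj]; exact hσ' j')]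
  -- memberships
  have hainv : a⁻¹ ∈ I₀ n := inv_mem ha
  have hbinv : b⁻¹ ∈ I₀ n := inv_mem hb
  -- the two matrix identities
  have hmul1 : (a : Matrix (Fin n) (Fin n) K) * W = W' * ((b⁻¹ : GL (Fin n) K) : Matrix (Fin n) (Fin n) K) := by
    have hgl : (a * w : GL (Fin n) K) = w' * b⁻¹ := by rw [heq]; group
    calc (a : Matrix (Fin n) (Fin n) K) * W = ((a * w : GL (Fin n) K) : Matrix (Fin n) (Fin n) K) := by
          rw [coe_mul, hW]
      _ = ((w' * b⁻¹ : GL (Fin n) K) : Matrix (Fin n) (Fin n) K) := by rw [hgl]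
      _ = _ := by rw [coe_mul, hW']
  have hmul2 : ((a⁻¹ : GL (Fin n) K) : Matrix (Fin n) (Fin n) K) * W' = W * (b : Matrix (Fin n) (Fin n) K) := by
    have hgl : (a⁻¹ * w' : GL (Fin n) K) = w * b := by rw [heq]; group
    calc ((a⁻¹ : GL (Fin n) K) : Matrix (Fin n) (Fin n) K) * W'
          = ((a⁻¹ * w' : GL (Fin n) K) : Matrix (Fin n) (Fin n) K) := by rw [coe_mul, hW']
      _ = ((w * b : GL (Fin n) K) : Matrix (Fin n) (Fin n) K) := by rw [hgl]
      _ = _ := by rw [coe_mul, hW]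
  have key1 : ∀ p, (a : Matrix (Fin n) (Fin n) K) (σ' p) (σ p) * P ^ m p
      = P ^ m' p * ((b⁻¹ : GL (Fin n) K) : Matrix (Fin n) (Fin n) K) p p := by
    intro p
    have e1 := congrFun (congrFun hmul1 (σ' p)) p
    rw [Matrix.mul_apply, Matrix.mul_apply] at e1
    rw [Finset.sum_eq_single (σ p)
        (fun k _ hk => by rw [hWzero k p hk, mul_zero])
        (fun hh => absurd (Finset.mem_univ _) hh),
      Finset.sum_eq_single p
        (fun k _ hk => by
          rw [hW'zero (σ' p) k (fun e => hk (hσ'inj e).symm), zero_mul])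
        (fun hh => absurd (Finset.mem_univ _) hh)] at e1
    rw [hm p, hm' p] at e1
    exact e1
  have key2 : ∀ p, ((a⁻¹ : GL (Fin n) K) : Matrix (Fin n) (Fin n) K) (σ p) (σ' p) * P ^ m' p
      = P ^ m p * (b : Matrix (Fin n) (Fin n) K) p p := by
    intro p
    have e1 := congrFun (congrFun hmul2 (σ p)) p
    rw [Matrix.mul_apply, Matrix.mul_apply] at e1
    rw [Finset.sum_eq_single (σ' p)
        (fun k _ hk => by rw [hW'zero k p hk, mul_zero])
        (fun hh => absurd (Finset.mem_univ _) hh),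
      Finset.sum_eq_single p
        (fun k _ hk => by
          rw [hWzero (σ p) k (fun e => hk (hσinj e).symm), zero_mul])
        (fun hh => absurd (Finset.mem_univ _) hh)] at e1
    rw [hm' p, hm p] at e1
    exact e1
  -- the exponents agree
  have hmeq : ∀ p, m p = m' p := by
    intro p
    obtain ⟨ra, hra⟩ := ha.1 (σ' p) (σ p)
    obtain ⟨ub, hub⟩ := diag_unit hbinv p
    obtain ⟨ra', hra'⟩ := hainv.1 (σ p) (σ' p)
    obtain ⟨ub', hub'⟩ := diag_unit hb p
    have e1 := key1 p
    rw [hra, hub] at e1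
    have h1 : m p ≤ m' p := bi_le_of_eq hπ _ _ _ _ e1
    have e2 := key2 p
    rw [hra', hub'] at e2
    have h2 : m' p ≤ m p := bi_le_of_eq hπ _ _ _ _ e2
    omega
  -- the permutations agree
  have hσeq : ∀ p, σ' p = σ p := by
    intro p
    by_contra hne
    rcases lt_or_gt_of_ne (fun e : (σ p : ℕ) = (σ' p : ℕ) => hne (Fin.ext e.symm))
      with hlt | hlt
    · -- σ p < σ' p : the entry of a at (σ' p, σ p) is below the diagonal
      obtain ⟨ra, hram, hra⟩ := ha.2.2 (σ' p) (σ p) hlt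
      obtain ⟨ub, hub⟩ := diag_unit hbinv p
      have e1 := key1 p
      rw [hra, hub, hmeq p] at e1
      have : ra = (ub : R) := bi_unit_of_eq hπ _ _ _ e1
      rw [this] at hram
      exact (IsLocalRing.mem_maximalIdeal _).mp hram (Units.isUnit ub)
    · -- σ' p < σ p : the entry of a⁻¹ at (σ p, σ' p) is below the diagonal
      obtain ⟨ra, hram, hra⟩ := hainv.2.2 (σ p) (σ' p) hlt
      obtain ⟨ub, hub⟩ := diag_unit hb p
      have e2 := key2 p
      rw [hra, hub, ← hmeq p] at e2
      have : ra = (ub : R) := bi_unit_of_eq hπ _ _ _ e2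
      rw [this] at hram
      exact (IsLocalRing.mem_maximalIdeal _).mp hram (Units.isUnit ub)
  -- conclude
  apply Units.ext
  show W' = W
  ext i j
  by_cases hij : i = σ j
  · subst hij
    calc W' (σ j) j = W' (σ' j) j := by rw [hσeq j]
      _ = P ^ m' j := hm' j
      _ = P ^ m j := by rw [hmeq j]
      _ = W (σ j) j := (hm j).symm
  · rw [hWzero i j hij, hW'zero i j (by rwa [hσeq j])]

end BITest

variable (R K) (n)

/-- Bruhat–Iwahori decomposition. Let `K` be a nonarchimedean local
field with ring of integers `𝔬` and uniformizer `π`, and let `I₀` be the standard Iwahori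
subgroup of `GL(n,K)`. Then every `g ∈ GL(n,K)` lies in the double coset `I₀ w I₀` for
exactly one `π`-monomial matrix `w`. -/
theorem bruhat_iwahori_decomposition (hn : 1 ≤ n) (π : R) (hπ : Irreducible π)
    (g : GL (Fin n) K) :
    ∃! w : GL (Fin n) K, IsPiMonomial R K n π (w : Matrix (Fin n) (Fin n) K) ∧
      ∃ a ∈ IwahoriSet R K n, ∃ b ∈ IwahoriSet R K n, g = a * w * b := by
  obtain ⟨w, hw, a, ha, b, hb, hg⟩ := BITest.exists_decomp hπ g
  refine ⟨w, ⟨hw, a, ha, b, hb, hg⟩, ?_⟩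
  rintro w' ⟨hw', a', ha', b', hb', hg'⟩
  have h1 : a' * w' * b' = a * w * b := by rw [← hg, ← hg']
  have heq : w' = (a'⁻¹ * a) * w * (b * b'⁻¹) := by
    calc w' = a'⁻¹ * (a' * w' * b') * b'⁻¹ := by group
      _ = a'⁻¹ * (a * w * b) * b'⁻¹ := by rw [h1]
      _ = (a'⁻¹ * a) * w * (b * b'⁻¹) := by group
  exact BITest.uniq_core hπ hw hw'
    (BITest.mul_mem (BITest.inv_mem ha') ha) (BITest.mul_mem hb (BITest.inv_mem hb')) heq

end BruhatIwahori
end
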